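/- arXiv:1806.04274 — 9 statements merged into one kernel-verified Lean document; each statement's English description precedes it below -/
import Mathlib

section
/- Monotonicity of fractional approximation properties: suppose 𝒜 is SPD with ‖𝒜‖ normalized appropriately, and P satisfies a FAP(β,η) with respect to 𝒜 with constant K, meaning for every vector v there exists a coarse vector v_c with ‖v − P v_c‖²_{𝒜^η} ≤ (K/‖𝒜‖^{2β−η})⟨𝒜^{2β} v, v⟩. Then for any 0 ≤ α ≤ β and κ ≥ η, P satisfies a FAP(α,κ) with constant at most K. -/
open Matrix

/-- The ℓ² operator norm of a matrix, via its action on Euclidean space. -/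
noncomputable def opNorm {m n : ℕ} (M : Matrix (Fin m) (Fin n) ℂ) : ℝ :=
  ‖(Matrix.toEuclideanLin M).toContinuousLinearMap‖

/-- Real power of a Hermitian matrix, via the spectral decomposition. -/
noncomputable def hrpow {n : ℕ} {A : Matrix (Fin n) (Fin n) ℂ}
    (hA : A.IsHermitian) (s : ℝ) : Matrix (Fin n) (Fin n) ℂ :=
  (hA.eigenvectorUnitary : Matrix (Fin n) (Fin n) ℂ) *
    Matrix.diagonal (fun i => ((hA.eigenvalues i ^ s : ℝ) : ℂ)) *
    (star hA.eigenvectorUnitary : Matrix (Fin n) (Fin n) ℂ)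

/-- `P` satisfies a fractional approximation property FAP(β,η) with respect to the
Hermitian matrix `A` with constant `K`: for every `v` there is a coarse vector `v_c`
with `‖v − P v_c‖²_{A^η} ≤ (K/‖A‖^{2β−η}) ⟨A^{2β} v, v⟩`. -/
def FAP {n nc : ℕ} {A : Matrix (Fin n) (Fin n) ℂ} (hA : A.IsHermitian)
    (P : Matrix (Fin n) (Fin nc) ℂ) (β η K : ℝ) : Prop :=
  ∀ v : Fin n → ℂ, ∃ vc : Fin nc → ℂ,
    (star (v - P.mulVec vc) ⬝ᵥ (hrpow hA η).mulVec (v - P.mulVec vc)).re ≤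
      K / opNorm A ^ (2 * β - η) * (star v ⬝ᵥ (hrpow hA (2 * β)).mulVec v).re


set_option maxHeartbeats 1000000 in
set_option synthInstance.maxHeartbeats 1000000 in
lemma quad_eq {n : ℕ} {A : Matrix (Fin n) (Fin n) ℂ} (hA : A.IsHermitian) (s : ℝ)
    (w : Fin n → ℂ) :
    (star w ⬝ᵥ (hrpow hA s).mulVec w).re =
      ∑ i, hA.eigenvalues i ^ s *
        Complex.normSq ((star (hA.eigenvectorUnitary : Matrix (Fin n) (Fin n) ℂ)).mulVec w i) := by
  set U : Matrix (Fin n) (Fin n) ℂ := (hA.eigenvectorUnitary : Matrix (Fin n) (Fin n) ℂ)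
  set c : Fin n → ℂ := (star U).mulVec w with hc
  have h1 : star w ⬝ᵥ (hrpow hA s).mulVec w =
      star c ⬝ᵥ (Matrix.diagonal (fun i => ((hA.eigenvalues i ^ s : ℝ) : ℂ))).mulVec c := by
    rw [hrpow, ← Matrix.mulVec_mulVec, ← Matrix.mulVec_mulVec, Matrix.dotProduct_mulVec,
      hc]
    congr 1
    rw [Matrix.star_mulVec, ← Matrix.star_eq_conjTranspose, star_star]
  rw [h1]
  simp only [dotProduct, Matrix.mulVec_diagonal, Complex.re_sum]
  congr 1; ext i
  simp only [Pi.star_apply, Complex.star_def]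
  rw [show (starRingEnd ℂ) (c i) * (((hA.eigenvalues i ^ s : ℝ) : ℂ) * c i)
      = ((hA.eigenvalues i ^ s : ℝ) : ℂ) * (c i * (starRingEnd ℂ) (c i)) by ring,
    Complex.mul_conj, ← Complex.ofReal_mul, Complex.ofReal_re]

set_option maxHeartbeats 1000000 in
set_option synthInstance.maxHeartbeats 1000000 in
lemma eig_le_opNorm {n : ℕ} {A : Matrix (Fin n) (Fin n) ℂ} (hA : A.IsHermitian) (i : Fin n) :
    hA.eigenvalues i ≤ opNorm A := by
  have hb : ‖hA.eigenvectorBasis i‖ = 1 := hA.eigenvectorBasis.orthonormal.1 i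
  have h1 : (Matrix.toEuclideanLin A).toContinuousLinearMap (hA.eigenvectorBasis i)
      = hA.eigenvalues i • hA.eigenvectorBasis i := by
    ext j
    simp [Matrix.toEuclideanLin_apply, hA.mulVec_eigenvectorBasis]
  have h2 := (Matrix.toEuclideanLin A).toContinuousLinearMap.le_opNorm (hA.eigenvectorBasis i)
  rw [h1, norm_smul, hb] at h2
  refine le_trans (le_abs_self _) ?_
  simpa [opNorm, Real.norm_eq_abs] using h2

open scoped ComplexOrder in
/-- Monotonicity of fractional approximation properties: a FAP(β,η)
with constant `K` implies a FAP(α,κ) with constant (at most) `K` for all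
`0 ≤ α ≤ β` and `κ ≥ η`. -/
theorem FAP_monotone {n nc : ℕ} {A : Matrix (Fin n) (Fin n) ℂ} (hA : A.PosDef)
    (P : Matrix (Fin n) (Fin nc) ℂ) (β η K α κ : ℝ)
    (hη : 0 ≤ η) (hK : 0 ≤ K)
    (hfap : FAP hA.isHermitian P β η K)
    (hα : 0 ≤ α) (hαβ : α ≤ β) (hκ : η ≤ κ) :
    FAP hA.isHermitian P α κ K := by
  intro v
  obtain ⟨vc, hvc⟩ := hfap v
  refine ⟨vc, ?_⟩
  rcases Nat.eq_zero_or_pos n with hn | hn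
  · subst hn
    simp [dotProduct]
  set N := opNorm A with hNdef
  have hN : 0 < N :=
    lt_of_lt_of_le (hA.eigenvalues_pos ⟨0, hn⟩) (eig_le_opNorm hA.isHermitian ⟨0, hn⟩)
  set w := v - P.mulVec vc with hw
  rw [quad_eq, quad_eq] at hvc ⊢
  set lam := hA.isHermitian.eigenvalues with hlam
  set c : Fin n → ℝ := fun i => Complex.normSq
      ((star (hA.isHermitian.eigenvectorUnitary : Matrix (Fin n) (Fin n) ℂ)).mulVec w i) with hc
  set d : Fin n → ℝ := fun i => Complex.normSq
      ((star (hA.isHermitian.eigenvectorUnitary : Matrix (Fin n) (Fin n) ℂ)).mulVec v i) with hd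
  have hlampos : ∀ i, 0 < lam i := fun i => hA.eigenvalues_pos i
  have hlamle : ∀ i, lam i ≤ N := fun i => eig_le_opNorm hA.isHermitian i
  have step1 : ∑ i, lam i ^ κ * c i ≤ N ^ (κ - η) * ∑ i, lam i ^ η * c i := by
    rw [Finset.mul_sum]
    refine Finset.sum_le_sum fun i _ => ?_
    have h1 : lam i ^ κ = lam i ^ (κ - η) * lam i ^ η := by
      rw [← Real.rpow_add (hlampos i)]; ring_nf
    rw [h1, mul_assoc]
    exact mul_le_mul_of_nonneg_right
      (Real.rpow_le_rpow (hlampos i).le (hlamle i) (sub_nonneg.2 hκ))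
      (mul_nonneg (Real.rpow_nonneg (hlampos i).le _) (Complex.normSq_nonneg _))
  have step2 : ∑ i, lam i ^ (2 * β) * d i ≤ N ^ (2 * β - 2 * α) * ∑ i, lam i ^ (2 * α) * d i := by
    rw [Finset.mul_sum]
    refine Finset.sum_le_sum fun i _ => ?_
    have h1 : lam i ^ (2 * β) = lam i ^ (2 * β - 2 * α) * lam i ^ (2 * α) := by
      rw [← Real.rpow_add (hlampos i)]; ring_nf
    rw [h1, mul_assoc]
    exact mul_le_mul_of_nonneg_right
      (Real.rpow_le_rpow (hlampos i).le (hlamle i) (by linarith))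
      (mul_nonneg (Real.rpow_nonneg (hlampos i).le _) (Complex.normSq_nonneg _))
  have hsum2α : 0 ≤ ∑ i, lam i ^ (2 * α) * d i :=
    Finset.sum_nonneg fun i _ =>
      mul_nonneg (Real.rpow_nonneg (hlampos i).le _) (Complex.normSq_nonneg _)
  have harith : N ^ (κ - η) * (K / N ^ (2 * β - η) * N ^ (2 * β - 2 * α)) =
      K / N ^ (2 * α - κ) := by
    calc N ^ (κ - η) * (K / N ^ (2 * β - η) * N ^ (2 * β - 2 * α))
        = K * (N ^ (κ - η) * N ^ (2 * β - 2 * α) * (N ^ (2 * β - η))⁻¹) := by ring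
      _ = K * (N ^ (κ - η) * N ^ (2 * β - 2 * α) * N ^ (-(2 * β - η))) := by
          rw [← Real.rpow_neg hN.le]
      _ = K * N ^ ((κ - η) + (2 * β - 2 * α) + (-(2 * β - η))) := by
          rw [Real.rpow_add hN, Real.rpow_add hN]
      _ = K * N ^ (-(2 * α - κ)) := by congr 1; ring
      _ = K / N ^ (2 * α - κ) := by rw [Real.rpow_neg hN.le, div_eq_mul_inv]
  calc ∑ i, lam i ^ κ * c i
      ≤ N ^ (κ - η) * ∑ i, lam i ^ η * c i := step1
    _ ≤ N ^ (κ - η) * (K / N ^ (2 * β - η) * ∑ i, lam i ^ (2 * β) * d i) :=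
        mul_le_mul_of_nonneg_left hvc (Real.rpow_nonneg hN.le _)
    _ ≤ N ^ (κ - η) * (K / N ^ (2 * β - η) *
          (N ^ (2 * β - 2 * α) * ∑ i, lam i ^ (2 * α) * d i)) := by
        refine mul_le_mul_of_nonneg_left (mul_le_mul_of_nonneg_left step2 ?_)
          (Real.rpow_nonneg hN.le _)
        exact div_nonneg hK (Real.rpow_nonneg hN.le _)
    _ = K / N ^ (2 * α - κ) * ∑ i, lam i ^ (2 * α) * d i := by
        rw [← harith]; ring
end

section
/- Strong implies super-strong approximation property with squared constant: let 𝒜 be SPD and suppose P satisfies a FAP(β,β) with respect to 𝒜 with constant K, i.e., for every v there exists v_c with ‖v − P v_c‖²_{𝒜^β} ≤ (K/‖𝒜‖^{β})⟨𝒜^{2β} v, v⟩. Then P satisfies a FAP(β,0) with constant at most K², i.e., for every v there exists v_c with ‖v − P v_c‖² ≤ (K²/‖𝒜‖^{2β})‖𝒜^β v‖². -/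
open Matrix

/-- Squared Euclidean norm of a complex vector. -/
noncomputable def vnormSq {m : Type*} [Fintype m] (x : m → ℂ) : ℝ := (star x ⬝ᵥ x).re

section Infra

variable {n m : ℕ} {A : Matrix (Fin n) (Fin n) ℂ}

lemma star_mul_self_eigen (hA : A.IsHermitian) :
    (star hA.eigenvectorUnitary : Matrix (Fin n) (Fin n) ℂ) *
      (hA.eigenvectorUnitary : Matrix (Fin n) (Fin n) ℂ) = 1 := by
  simpa using congrArg Subtype.val (star_mul_self hA.eigenvectorUnitary)

lemma mul_star_self_eigen (hA : A.IsHermitian) :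
    (hA.eigenvectorUnitary : Matrix (Fin n) (Fin n) ℂ) *
      (star hA.eigenvectorUnitary : Matrix (Fin n) (Fin n) ℂ) = 1 := by
  simpa using congrArg Subtype.val (mul_star_self hA.eigenvectorUnitary)

lemma hrpow_isHermitian (hA : A.IsHermitian) (s : ℝ) : (hrpow hA s).IsHermitian := by
  have hd : (Matrix.diagonal (fun i => ((hA.eigenvalues i ^ s : ℝ) : ℂ))).IsHermitian := by
    rw [Matrix.IsHermitian, diagonal_conjTranspose]
    have : star (fun i => ((hA.eigenvalues i ^ s : ℝ) : ℂ)) =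
        fun i => ((hA.eigenvalues i ^ s : ℝ) : ℂ) := by
      funext i
      simp [Pi.star_apply, Complex.star_def, Complex.conj_ofReal]
    rw [this]
  have := Matrix.isHermitian_mul_mul_conjTranspose
    (hA.eigenvectorUnitary : Matrix (Fin n) (Fin n) ℂ) hd
  simpa [hrpow, Matrix.star_eq_conjTranspose] using this

lemma hrpow_mul_hrpow (hA : A.IsHermitian) (hpos : ∀ i, 0 < hA.eigenvalues i) (s t : ℝ) :
    hrpow hA s * hrpow hA t = hrpow hA (s + t) := by
  set u := (hA.eigenvectorUnitary : Matrix (Fin n) (Fin n) ℂ) with hu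
  have hcanc : ∀ z : Matrix (Fin n) (Fin n) ℂ, star u * (u * z) = z := by
    intro z
    rw [← Matrix.mul_assoc, star_mul_self_eigen hA, Matrix.one_mul]
  unfold hrpow
  simp only [← hu, Matrix.mul_assoc, hcanc]
  congr 1
  rw [← Matrix.mul_assoc, diagonal_mul_diagonal]
  have : (fun i => ((hA.eigenvalues i ^ s : ℝ) : ℂ) * ((hA.eigenvalues i ^ t : ℝ) : ℂ)) =
      fun i => ((hA.eigenvalues i ^ (s + t) : ℝ) : ℂ) := by
    funext i
    rw [← Complex.ofReal_mul, ← Real.rpow_add (hpos i)]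
  rw [this]

lemma hrpow_zero (hA : A.IsHermitian) : hrpow hA 0 = 1 := by
  unfold hrpow
  simp [Real.rpow_zero, mul_star_self_eigen hA]

noncomputable def iotaE (n : ℕ) : (Fin n → ℂ) ≃ₗ[ℂ] EuclideanSpace ℂ (Fin n) :=
  (WithLp.linearEquiv 2 ℂ (Fin n → ℂ)).symm

lemma inner_iota (x y : Fin n → ℂ) : (inner ℂ (iotaE n x) (iotaE n y) : ℂ) = star x ⬝ᵥ y := by
  simp [iotaE, PiLp.inner_apply, dotProduct, mul_comm]

lemma toEuclideanLin_iota (M : Matrix (Fin m) (Fin n) ℂ) (x : Fin n → ℂ) :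
    Matrix.toEuclideanLin M (iotaE n x) = iotaE m (M.mulVec x) := rfl

lemma norm_iota_sq (x : Fin n → ℂ) : ‖iotaE n x‖ ^ 2 = (star x ⬝ᵥ x).re := by
  rw [← inner_iota x x, @norm_sq_eq_re_inner ℂ]; rfl

lemma herm_shift {M : Matrix (Fin n) (Fin n) ℂ} (hM : M.IsHermitian) (x y : Fin n → ℂ) :
    star x ⬝ᵥ M.mulVec y = star (M.mulVec x) ⬝ᵥ y := by
  rw [Matrix.dotProduct_mulVec, Matrix.star_mulVec, hM.eq]

end Infra


open scoped ComplexOrder in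
/-- strong implies super-strong approximation property with squared
constant: if for every `v` there is `v_c` with
`‖v − P v_c‖²_{A^β} ≤ (K/‖A‖^β)⟨A^{2β} v, v⟩`, then for every `v` there is `v_c` with
`‖v − P v_c‖² ≤ (K²/‖A‖^{2β})‖A^β v‖²`. -/
theorem SAP_implies_SSAP {n nc : ℕ} {A : Matrix (Fin n) (Fin n) ℂ} (hA : A.PosDef)
    (P : Matrix (Fin n) (Fin nc) ℂ) (β K : ℝ) (hβ : 0 < β) (hK : 0 ≤ K)
    (hfap : ∀ v : Fin n → ℂ, ∃ vc : Fin nc → ℂ,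
      (star (v - P.mulVec vc) ⬝ᵥ (hrpow hA.isHermitian β).mulVec (v - P.mulVec vc)).re ≤
        K / opNorm A ^ β * (star v ⬝ᵥ (hrpow hA.isHermitian (2 * β)).mulVec v).re) :
    ∀ v : Fin n → ℂ, ∃ vc : Fin nc → ℂ,
      vnormSq (v - P.mulVec vc) ≤
        K ^ 2 / opNorm A ^ (2 * β) * vnormSq ((hrpow hA.isHermitian β).mulVec v) := by
  intro v
  have hH : A.IsHermitian := hA.isHermitian
  have hpos : ∀ i, 0 < (hA.isHermitian).eigenvalues i := fun i => hA.eigenvalues_pos i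
  set M : Matrix (Fin n) (Fin n) ℂ := hrpow hA.isHermitian β with hM_def
  set B : Matrix (Fin n) (Fin n) ℂ := hrpow hA.isHermitian (β / 2) with hB_def
  set N : Matrix (Fin n) (Fin n) ℂ := hrpow hA.isHermitian (-β) with hN_def
  set M2 : Matrix (Fin n) (Fin n) ℂ := hrpow hA.isHermitian (2 * β) with hM2_def
  have hBherm : B.IsHermitian := hrpow_isHermitian _ _
  have hMherm : M.IsHermitian := hrpow_isHermitian _ _
  have hNherm : N.IsHermitian := hrpow_isHermitian _ _
  have hBB : B * B = M := by
    rw [hB_def, hM_def, hrpow_mul_hrpow _ hpos, add_halves]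
  have hMN : M * N = 1 := by
    rw [hM_def, hN_def, hrpow_mul_hrpow _ hpos, add_neg_cancel, hrpow_zero]
  have hMM : M * M = M2 := by
    rw [hM_def, hM2_def, hrpow_mul_hrpow _ hpos, two_mul]
  have hNM2N : N * (M2 * N) = 1 := by
    rw [hN_def, hM2_def, hrpow_mul_hrpow _ hpos, hrpow_mul_hrpow _ hpos]
    rw [show -β + (2 * β + -β) = 0 by ring, hrpow_zero]
  -- the subspace and projection
  set S : Submodule ℂ (EuclideanSpace ℂ (Fin n)) :=
    LinearMap.range (Matrix.toEuclideanLin (B * P)) with hS_def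
  set y : EuclideanSpace ℂ (Fin n) := iotaE n (B.mulVec v) with hy_def
  set p : S := S.orthogonalProjectionOnto y with hp_def
  obtain ⟨vcE, hvcE⟩ := p.2
  set vc0 : Fin nc → ℂ := (iotaE nc).symm vcE with hvc0_def
  have hpv : (p : EuclideanSpace ℂ (Fin n)) = iotaE n (B.mulVec (P.mulVec vc0)) := by
    have h0 : Matrix.toEuclideanLin (B * P) (iotaE nc vc0) = (p : EuclideanSpace ℂ (Fin n)) := by
      rw [hvc0_def, (iotaE nc).apply_symm_apply]; exact hvcE
    rw [← h0, toEuclideanLin_iota, ← Matrix.mulVec_mulVec]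
  refine ⟨vc0, ?_⟩
  set e : Fin n → ℂ := v - P.mulVec vc0 with he_def
  have hyp : y - (p : EuclideanSpace ℂ (Fin n)) = iotaE n (B.mulVec e) := by
    rw [hpv, hy_def, ← map_sub, ← Matrix.mulVec_sub]
  have hortho : y - (p : EuclideanSpace ℂ (Fin n)) ∈ Sᗮ :=
    S.sub_starProjection_mem_orthogonal y
  -- orthogonality against any element B P z
  have horth0 : ∀ z : Fin nc → ℂ, star (B.mulVec e) ⬝ᵥ (B.mulVec (P.mulVec z)) = 0 := by
    intro z
    have hw : Matrix.toEuclideanLin (B * P) (iotaE nc z) ∈ S := LinearMap.mem_range_self _ _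
    have h0 : (inner ℂ (Matrix.toEuclideanLin (B * P) (iotaE nc z))
        (y - (p : EuclideanSpace ℂ (Fin n))) : ℂ) = 0 :=
      (Submodule.mem_orthogonal S _).mp hortho _ hw
    have h1 : (inner ℂ (y - (p : EuclideanSpace ℂ (Fin n)))
        (Matrix.toEuclideanLin (B * P) (iotaE nc z)) : ℂ) = 0 := by
      rw [← inner_conj_symm, h0, map_zero]
    rw [hyp, toEuclideanLin_iota, ← Matrix.mulVec_mulVec, inner_iota] at h1
    exact h1
  -- quantities
  set t : ℝ := vnormSq (M.mulVec v) with ht_def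
  set c : ℝ := vnormSq e with hc_def
  set q : ℝ := K / opNorm A ^ β with hq_def
  have hopn : (0:ℝ) ≤ opNorm A := norm_nonneg _
  have hq0 : 0 ≤ q := div_nonneg hK (Real.rpow_nonneg hopn β)
  have ht0 : 0 ≤ t := by
    rw [ht_def, vnormSq, ← norm_iota_sq]; positivity
  have hc0 : 0 ≤ c := by
    rw [hc_def, vnormSq, ← norm_iota_sq]; positivity
  have hM2v : (star v ⬝ᵥ M2.mulVec v).re = t := by
    rw [← hMM, ← Matrix.mulVec_mulVec, herm_shift hMherm]
    rfl
  -- Step 1: minimality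
  obtain ⟨vc1, h1⟩ := hfap v
  have step1 : ‖y - (p : EuclideanSpace ℂ (Fin n))‖ ^ 2 ≤ q * t := by
    set w' : EuclideanSpace ℂ (Fin n) := Matrix.toEuclideanLin (B * P) (iotaE nc vc1) with hw'_def
    have hw'S : w' ∈ S := LinearMap.mem_range_self _ _
    have hsubS : (p : EuclideanSpace ℂ (Fin n)) - w' ∈ S := Submodule.sub_mem S p.2 hw'S
    have hinner0 : (inner ℂ (y - (p : EuclideanSpace ℂ (Fin n)))
        ((p : EuclideanSpace ℂ (Fin n)) - w') : ℂ) = 0 := by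
      rw [← inner_conj_symm, (Submodule.mem_orthogonal S _).mp hortho _ hsubS, map_zero]
    have hpyth : ‖y - w'‖ ^ 2 = ‖y - (p : EuclideanSpace ℂ (Fin n))‖ ^ 2
        + ‖(p : EuclideanSpace ℂ (Fin n)) - w'‖ ^ 2 := by
      have := norm_add_sq (𝕜 := ℂ) (y - (p : EuclideanSpace ℂ (Fin n)))
        ((p : EuclideanSpace ℂ (Fin n)) - w')
      rw [hinner0] at this
      simpa [sub_add_sub_cancel] using this
    have hle : ‖y - (p : EuclideanSpace ℂ (Fin n))‖ ^ 2 ≤ ‖y - w'‖ ^ 2 := by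
      rw [hpyth]; exact le_add_of_nonneg_right (sq_nonneg _)
    refine hle.trans ?_
    have hyw : y - w' = iotaE n (B.mulVec (v - P.mulVec vc1)) := by
      rw [hw'_def, toEuclideanLin_iota, hy_def, ← map_sub, ← Matrix.mulVec_mulVec,
        ← Matrix.mulVec_sub]
    rw [hyw, norm_iota_sq, ← herm_shift hBherm, Matrix.mulVec_mulVec, hBB, hq_def, ← hM2v]
    exact h1
  -- Step 2
  set u : Fin n → ℂ := N.mulVec e with hu_def
  obtain ⟨wc, h2⟩ := hfap u
  have hM2u : (star u ⬝ᵥ M2.mulVec u).re = c := by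
    rw [hu_def, ← herm_shift hNherm, Matrix.mulVec_mulVec, Matrix.mulVec_mulVec,
      Matrix.mul_assoc, hNM2N, Matrix.one_mulVec]
    rfl
  have step2 : ‖iotaE n (B.mulVec (u - P.mulVec wc))‖ ^ 2 ≤ q * c := by
    rw [norm_iota_sq, ← herm_shift hBherm, Matrix.mulVec_mulVec, hBB, hq_def, ← hM2u]
    exact h2
  -- Step 3
  have step3 : c ≤ ‖y - (p : EuclideanSpace ℂ (Fin n))‖ * ‖iotaE n (B.mulVec (u - P.mulVec wc))‖ := by
    have key : star e ⬝ᵥ e = star (B.mulVec e) ⬝ᵥ (B.mulVec (u - P.mulVec wc)) := by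
      have hsplit : star (B.mulVec e) ⬝ᵥ (B.mulVec u) =
          star (B.mulVec e) ⬝ᵥ (B.mulVec (u - P.mulVec wc))
            + star (B.mulVec e) ⬝ᵥ (B.mulVec (P.mulVec wc)) := by
        rw [← dotProduct_add, ← Matrix.mulVec_add, sub_add_cancel]
      have hBu : star (B.mulVec e) ⬝ᵥ (B.mulVec u) = star e ⬝ᵥ e := by
        rw [← herm_shift hBherm, Matrix.mulVec_mulVec, hBB, hu_def, Matrix.mulVec_mulVec,
          hMN, Matrix.one_mulVec]
      rw [← hBu, hsplit, horth0 wc, add_zero]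
    have hcs : (star e ⬝ᵥ e).re ≤ ‖iotaE n (B.mulVec e)‖ * ‖iotaE n (B.mulVec (u - P.mulVec wc))‖ := by
      rw [key, ← inner_iota]
      exact re_inner_le_norm (𝕜 := ℂ) _ _
    calc c = (star e ⬝ᵥ e).re := rfl
      _ ≤ ‖iotaE n (B.mulVec e)‖ * ‖iotaE n (B.mulVec (u - P.mulVec wc))‖ := hcs
      _ = _ := by rw [← hyp]
  -- final arithmetic
  have hna : ‖y - (p : EuclideanSpace ℂ (Fin n))‖ ≤ Real.sqrt (q * t) := by
    rw [← Real.sqrt_sq (norm_nonneg (y - (p : EuclideanSpace ℂ (Fin n))))]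
    exact Real.sqrt_le_sqrt step1
  have hnb : ‖iotaE n (B.mulVec (u - P.mulVec wc))‖ ≤ Real.sqrt (q * c) := by
    rw [← Real.sqrt_sq (norm_nonneg (iotaE n (B.mulVec (u - P.mulVec wc))))]
    exact Real.sqrt_le_sqrt step2
  have hc_le : c ≤ Real.sqrt (q * t) * Real.sqrt (q * c) :=
    step3.trans (mul_le_mul hna hnb (norm_nonneg _) (Real.sqrt_nonneg _))
  have hsq : Real.sqrt q * Real.sqrt q = q := Real.mul_self_sqrt hq0
  have hqt : Real.sqrt (q * t) * Real.sqrt (q * c) = q * (Real.sqrt t * Real.sqrt c) := by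
    rw [Real.sqrt_mul hq0 t, Real.sqrt_mul hq0 c]
    calc Real.sqrt q * Real.sqrt t * (Real.sqrt q * Real.sqrt c)
        = Real.sqrt q * Real.sqrt q * (Real.sqrt t * Real.sqrt c) := by ring
      _ = q * (Real.sqrt t * Real.sqrt c) := by rw [hsq]
  have hc_le2 : c ≤ q * Real.sqrt t * Real.sqrt c := by
    rw [hqt] at hc_le; linarith [hc_le]
  have hcc : Real.sqrt c * Real.sqrt c = c := Real.mul_self_sqrt hc0
  have htt : Real.sqrt t * Real.sqrt t = t := Real.mul_self_sqrt ht0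
  have hq2 : q ^ 2 = K ^ 2 / opNorm A ^ (2 * β) := by
    rw [hq_def, div_pow]
    congr 1
    rw [← Real.rpow_natCast (opNorm A ^ β) 2, ← Real.rpow_mul hopn]
    norm_num [mul_comm]
  have hfin : c ≤ q ^ 2 * t := by
    by_cases hc' : Real.sqrt c = 0
    · have hc00 : c = 0 := by rw [← hcc, hc', mul_zero]
      rw [hc00]
      have : 0 ≤ q ^ 2 * t := mul_nonneg (sq_nonneg q) ht0
      linarith
    · have hscpos : 0 < Real.sqrt c := (Real.sqrt_nonneg c).lt_of_ne (Ne.symm hc')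
      have hroot : Real.sqrt c ≤ q * Real.sqrt t := by
        have h' : Real.sqrt c * Real.sqrt c ≤ q * Real.sqrt t * Real.sqrt c := by
          rw [hcc]; exact hc_le2
        exact le_of_mul_le_mul_right h' hscpos
      calc c = Real.sqrt c * Real.sqrt c := hcc.symm
        _ ≤ (q * Real.sqrt t) * (q * Real.sqrt t) :=
            mul_self_le_mul_self (Real.sqrt_nonneg c) hroot
        _ = q ^ 2 * (Real.sqrt t * Real.sqrt t) := by ring
        _ = q ^ 2 * t := by rw [htt]
  rw [← hq2]
  exact hfin
end

section
/- Lower and upper bounds for a 2×2 block operator: let A, B, C, D be (rectangular) matrices of compatible sizes satisfying a₀‖x‖ ≤ ‖Ax‖ ≤ a₁‖x‖, ‖Bx‖ ≤ b‖x‖, ‖Cx‖ ≤ c‖x‖, d₀‖x‖ ≤ ‖Dx‖ ≤ d₁‖x‖ for all x, with a₀, d₀ > 0 and a₀d₀ > bc. Then for all x, y: η₀(‖x‖² + ‖y‖²) ≤ ‖Ax − By‖² + ‖−Cx + Dy‖² ≤ η₁(‖x‖² + ‖y‖²), where η₀ = ½[a₀² + b² + c² + d₀² − √((a₀²+b²−c²−d₀²)²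 + 4(a₀c+bd₀)²)] > 0 and η₁ = ½[a₁² + b² + c² + d₁² + √((a₁²+b²−c²−d₁²)² + 4(a₁c+bd₁)²)]. -/
open Matrix

private lemma quad_min (a b c d s t : ℝ) :
    (a^2+b^2+c^2+d^2 - Real.sqrt ((a^2+b^2-c^2-d^2)^2 + 4*(a*c+b*d)^2))/2 * (s^2+t^2)
      ≤ (a*s-b*t)^2 + (c*s-d*t)^2 := by
  have hΔ0 : (0:ℝ) ≤ (a^2+b^2-c^2-d^2)^2 + 4*(a*c+b*d)^2 := by positivity
  set r := Real.sqrt ((a^2+b^2-c^2-d^2)^2 + 4*(a*c+b*d)^2) with hr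
  have hr0 : 0 ≤ r := Real.sqrt_nonneg _
  have hr2 : r ^ 2 = (a^2+c^2-b^2-d^2)^2 + 4*(a*b+c*d)^2 := by
    rw [hr, Real.sq_sqrt hΔ0]; ring
  rcases eq_or_lt_of_le hr0 with h0 | hpos
  · have hP : a^2+c^2-b^2-d^2 = 0 := by nlinarith [sq_nonneg (a^2+c^2-b^2-d^2), sq_nonneg (a*b+c*d)]
    have hE : a*b+c*d = 0 := by nlinarith [sq_nonneg (a^2+c^2-b^2-d^2), sq_nonneg (a*b+c*d)]
    have hEst : (a*b+c*d)*(s*t) = 0 := by rw [hE]; ring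
    nlinarith [hP, hEst, sq_nonneg s, sq_nonneg t, h0]
  · nlinarith [sq_nonneg ((r + (a^2+c^2-b^2-d^2))*s - 2*(a*b+c*d)*t),
               sq_nonneg ((r - (a^2+c^2-b^2-d^2))*t - 2*(a*b+c*d)*s),
               hpos, hr2, mul_pos hpos hpos]

private lemma quad_max (a b c d s t : ℝ) :
    (a*s+b*t)^2 + (c*s+d*t)^2
      ≤ (a^2+b^2+c^2+d^2 + Real.sqrt ((a^2+b^2-c^2-d^2)^2 + 4*(a*c+b*d)^2))/2 * (s^2+t^2) := by
  have hΔ0 : (0:ℝ) ≤ (a^2+b^2-c^2-d^2)^2 + 4*(a*c+b*d)^2 := by positivity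
  set r := Real.sqrt ((a^2+b^2-c^2-d^2)^2 + 4*(a*c+b*d)^2) with hr
  have hr0 : 0 ≤ r := Real.sqrt_nonneg _
  have hr2 : r ^ 2 = (a^2+c^2-b^2-d^2)^2 + 4*(a*b+c*d)^2 := by
    rw [hr, Real.sq_sqrt hΔ0]; ring
  rcases eq_or_lt_of_le hr0 with h0 | hpos
  · have hP : a^2+c^2-b^2-d^2 = 0 := by nlinarith [sq_nonneg (a^2+c^2-b^2-d^2), sq_nonneg (a*b+c*d)]
    have hE : a*b+c*d = 0 := by nlinarith [sq_nonneg (a^2+c^2-b^2-d^2), sq_nonneg (a*b+c*d)]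
    have hEst : (a*b+c*d)*(s*t) = 0 := by rw [hE]; ring
    nlinarith [hP, hEst, sq_nonneg s, sq_nonneg t, h0]
  · nlinarith [sq_nonneg ((r - (a^2+c^2-b^2-d^2))*s - 2*(a*b+c*d)*t),
               sq_nonneg ((r + (a^2+c^2-b^2-d^2))*t - 2*(a*b+c*d)*s),
               hpos, hr2, mul_pos hpos hpos]

private lemma eta_pos (a b c d : ℝ) (ha : 0 < a) (hd : 0 < d) (hb : 0 ≤ b) (hc : 0 ≤ c)
    (hdet : b*c < a*d) :
    0 < (a^2+b^2+c^2+d^2 - Real.sqrt ((a^2+b^2-c^2-d^2)^2 + 4*(a*c+b*d)^2))/2 := by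
  have hΔ0 : (0:ℝ) ≤ (a^2+b^2-c^2-d^2)^2 + 4*(a*c+b*d)^2 := by positivity
  have hr2 := Real.sq_sqrt hΔ0
  have hr0 := Real.sqrt_nonneg ((a^2+b^2-c^2-d^2)^2 + 4*(a*c+b*d)^2)
  nlinarith [mul_pos (sub_pos.2 hdet) (sub_pos.2 hdet), pow_pos ha 2, pow_pos hd 2,
             sq_nonneg b, sq_nonneg c, hr2, hr0, mul_nonneg hb hc]

private lemma lower_aux' (a b c d s t u v η : ℝ) (ha : 0 < a) (hd : 0 < d) (hb : 0 ≤ b)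
    (hc : 0 ≤ c) (hdet : b*c < a*d) (hs : 0 ≤ s) (ht : 0 ≤ t)
    (hu : a*s - b*t ≤ u) (hv : d*t - c*s ≤ v)
    (hη0 : 0 ≤ η)
    (hq : ∀ s t : ℝ, η * (s^2+t^2) ≤ (a*s-b*t)^2 + (c*s-d*t)^2) :
    η * (s^2+t^2) ≤ u^2 + v^2 := by
  rcases le_or_gt (b*t) (a*s) with h1 | h1
  · rcases le_or_gt (c*s) (d*t) with h2 | h2
    · have e1 : (a*s-b*t)^2 ≤ u^2 := by
        apply pow_le_pow_left₀ (by linarith) hu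
      have e2 : (d*t-c*s)^2 ≤ v^2 := by
        apply pow_le_pow_left₀ (by linarith) hv
      have := hq s t
      linarith
    · -- d*t < c*s : use t' = c*s/d
      have htt' : t ≤ c*s/d := by rw [le_div_iff₀ hd]; nlinarith
      have hkey : 0 ≤ a*s - b*(c*s/d) := by
        rw [sub_nonneg, show b*(c*s/d) = b*c*s/d by ring, div_le_iff₀ hd]
        nlinarith [mul_nonneg hs (sub_pos.2 hdet).le]
      have h3 : a*s - b*(c*s/d) ≤ a*s - b*t := by
        have := mul_le_mul_of_nonneg_left htt' hb; linarith
      have hq2 := hq s (c*s/d)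
      have e0 : (c*s - d*(c*s/d))^2 = 0 := by field_simp; simp
      have e1 : (a*s-b*(c*s/d))^2 ≤ (a*s-b*t)^2 := pow_le_pow_left₀ hkey h3 2
      have e2 : (a*s-b*t)^2 ≤ u^2 := pow_le_pow_left₀ (le_trans hkey h3) hu 2
      have e3 : η * (s^2+t^2) ≤ η * (s^2+(c*s/d)^2) := by
        have ht2 : t^2 ≤ (c*s/d)^2 := pow_le_pow_left₀ ht htt' 2
        apply mul_le_mul_of_nonneg_left (by linarith) hη0
      have hv2 : (0:ℝ) ≤ v^2 := sq_nonneg v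
      linarith
  · -- a*s < b*t : use s' = b*t/a
    have hss' : s ≤ b*t/a := by rw [le_div_iff₀ ha]; nlinarith
    have hkey : 0 ≤ d*t - c*(b*t/a) := by
      rw [sub_nonneg, show c*(b*t/a) = c*b*t/a by ring, div_le_iff₀ ha]
      nlinarith [mul_nonneg ht (sub_pos.2 hdet).le]
    have h3 : d*t - c*(b*t/a) ≤ d*t - c*s := by
      have := mul_le_mul_of_nonneg_left hss' hc; linarith
    have hq2 := hq (b*t/a) t
    have e0 : (a*(b*t/a) - b*t)^2 = 0 := by field_simp; simp
    have e1 : (d*t-c*(b*t/a))^2 ≤ (d*t-c*s)^2 := pow_le_pow_left₀ hkey h3 2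
    have e2 : (d*t-c*s)^2 ≤ v^2 := pow_le_pow_left₀ (le_trans hkey h3) hv 2
    have e3 : η * (s^2+t^2) ≤ η * ((b*t/a)^2+t^2) := by
      have hs2 : s^2 ≤ (b*t/a)^2 := pow_le_pow_left₀ hs hss' 2
      apply mul_le_mul_of_nonneg_left (by linarith) hη0
    have hu2 : (0:ℝ) ≤ u^2 := sq_nonneg u
    linarith

/-- lower and upper bounds for the action of the 2×2 block operator
`[[A, −B], [−C, D]]`, acting as `(x,y) ↦ (Ax − By, −Cx + Dy)`. -/
theorem block_bound {m p r q : ℕ}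
    (A : Matrix (Fin m) (Fin p) ℂ) (B : Matrix (Fin m) (Fin q) ℂ)
    (C : Matrix (Fin r) (Fin p) ℂ) (D : Matrix (Fin r) (Fin q) ℂ)
    (a₀ a₁ b c d₀ d₁ : ℝ) (ha₀ : 0 < a₀) (hd₀ : 0 < d₀) (hb : 0 ≤ b) (hc : 0 ≤ c)
    (hA : ∀ x : EuclideanSpace ℂ (Fin p),
      a₀ * ‖x‖ ≤ ‖Matrix.toEuclideanLin A x‖ ∧ ‖Matrix.toEuclideanLin A x‖ ≤ a₁ * ‖x‖)
    (hB : ∀ x : EuclideanSpace ℂ (Fin q), ‖Matrix.toEuclideanLin B x‖ ≤ b * ‖x‖)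
    (hC : ∀ x : EuclideanSpace ℂ (Fin p), ‖Matrix.toEuclideanLin C x‖ ≤ c * ‖x‖)
    (hD : ∀ x : EuclideanSpace ℂ (Fin q),
      d₀ * ‖x‖ ≤ ‖Matrix.toEuclideanLin D x‖ ∧ ‖Matrix.toEuclideanLin D x‖ ≤ d₁ * ‖x‖)
    (hdet : b * c < a₀ * d₀) :
    0 < (a₀ ^ 2 + b ^ 2 + c ^ 2 + d₀ ^ 2 -
        Real.sqrt ((a₀ ^ 2 + b ^ 2 - c ^ 2 - d₀ ^ 2) ^ 2 + 4 * (a₀ * c + b * d₀) ^ 2)) / 2 ∧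
    ∀ (x : EuclideanSpace ℂ (Fin p)) (y : EuclideanSpace ℂ (Fin q)),
      (a₀ ^ 2 + b ^ 2 + c ^ 2 + d₀ ^ 2 -
          Real.sqrt ((a₀ ^ 2 + b ^ 2 - c ^ 2 - d₀ ^ 2) ^ 2 + 4 * (a₀ * c + b * d₀) ^ 2)) / 2 *
          (‖x‖ ^ 2 + ‖y‖ ^ 2) ≤
        ‖Matrix.toEuclideanLin A x - Matrix.toEuclideanLin B y‖ ^ 2 +
          ‖-Matrix.toEuclideanLin C x + Matrix.toEuclideanLin D y‖ ^ 2 ∧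
      ‖Matrix.toEuclideanLin A x - Matrix.toEuclideanLin B y‖ ^ 2 +
          ‖-Matrix.toEuclideanLin C x + Matrix.toEuclideanLin D y‖ ^ 2 ≤
        (a₁ ^ 2 + b ^ 2 + c ^ 2 + d₁ ^ 2 +
            Real.sqrt ((a₁ ^ 2 + b ^ 2 - c ^ 2 - d₁ ^ 2) ^ 2 + 4 * (a₁ * c + b * d₁) ^ 2)) / 2 *
          (‖x‖ ^ 2 + ‖y‖ ^ 2) := by
  have hpos := eta_pos a₀ b c d₀ ha₀ hd₀ hb hc hdet
  refine ⟨hpos, fun x y => ?_⟩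
  set u := ‖Matrix.toEuclideanLin A x - Matrix.toEuclideanLin B y‖ with hu_def
  set v := ‖-Matrix.toEuclideanLin C x + Matrix.toEuclideanLin D y‖ with hv_def
  have hu0 : 0 ≤ u := norm_nonneg _
  have hv0 : 0 ≤ v := norm_nonneg _
  have hveq : v = ‖Matrix.toEuclideanLin D y - Matrix.toEuclideanLin C x‖ := by
    rw [hv_def, neg_add_eq_sub]
  have hulb : a₀ * ‖x‖ - b * ‖y‖ ≤ u := by
    have h1 := norm_sub_norm_le (Matrix.toEuclideanLin A x) (Matrix.toEuclideanLin B y)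
    have h2 := (hA x).1
    have h3 := hB y
    rw [hu_def]; linarith
  have hvlb : d₀ * ‖y‖ - c * ‖x‖ ≤ v := by
    have h1 := norm_sub_norm_le (Matrix.toEuclideanLin D y) (Matrix.toEuclideanLin C x)
    have h2 := (hD y).1
    have h3 := hC x
    rw [hveq]; linarith
  have huub : u ≤ a₁ * ‖x‖ + b * ‖y‖ := by
    have h1 := norm_sub_le (Matrix.toEuclideanLin A x) (Matrix.toEuclideanLin B y)
    have h2 := (hA x).2
    have h3 := hB y
    rw [hu_def]; linarith
  have hvub : v ≤ c * ‖x‖ + d₁ * ‖y‖ := by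
    have h1 := norm_sub_le (Matrix.toEuclideanLin D y) (Matrix.toEuclideanLin C x)
    have h2 := (hD y).2
    have h3 := hC x
    have h4 := norm_add_le (-Matrix.toEuclideanLin C x) (Matrix.toEuclideanLin D y)
    rw [norm_neg] at h4
    rw [hv_def]; linarith
  constructor
  · have := lower_aux' a₀ b c d₀ ‖x‖ ‖y‖ u v _ ha₀ hd₀ hb hc hdet (norm_nonneg x)
      (norm_nonneg y) hulb hvlb hpos.le (fun s t => by
        have := quad_min a₀ b c d₀ s t
        convert this using 3 <;> ring)
    convert this using 3 <;> ring
  · have h1 : u^2 ≤ (a₁ * ‖x‖ + b * ‖y‖)^2 := pow_le_pow_left₀ hu0 huub 2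
    have h2 : v^2 ≤ (c * ‖x‖ + d₁ * ‖y‖)^2 := pow_le_pow_left₀ hv0 hvub 2
    have h3 := quad_max a₁ b c d₁ ‖x‖ ‖y‖
    have h4 : (a₁ ^ 2 + b ^ 2 + c ^ 2 + d₁ ^ 2 +
            Real.sqrt ((a₁ ^ 2 + b ^ 2 - c ^ 2 - d₁ ^ 2) ^ 2 + 4 * (a₁ * c + b * d₁) ^ 2)) / 2 *
          (‖x‖ ^ 2 + ‖y‖ ^ 2)
        = (a₁^2+b^2+c^2+d₁^2 + Real.sqrt ((a₁^2+b^2-c^2-d₁^2)^2 + 4*(a₁*c+b*d₁)^2))/2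
            * (‖x‖^2+‖y‖^2) := by ring_nf
    rw [h4]
    linarith
end

section
/- A weaker but cleaner lower bound for the 2×2 block operator: under the hypotheses a₀‖x‖ ≤ ‖Ax‖, ‖Bx‖ ≤ b‖x‖, ‖Cx‖ ≤ c‖x‖, d₀‖x‖ ≤ ‖Dx‖ with a₀d₀ > bc > 0, there exist ε₁, ε₂ ∈ (0,1) such that both a₀²(1−ε₁) − c²(1/ε₂ − 1) > 0 and d₀²(1−ε₂) − b²(1/ε₁ − 1) > 0, and consequently ‖Ax − By‖² + ‖Cx − Dy‖² ≥ min over these two quantities times (‖x‖² + ‖y‖²) > 0; in particular, the block matrix [[A,−B],[−C,D]] is injective. -/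
open Matrix

/-- ε-inequality: `‖u−v‖² ≥ (1−ε)‖u‖² − (1/ε−1)‖v‖²` for `ε > 0`. -/
lemma eps_norm_lower {E : Type*} [NormedAddCommGroup E]
    (u v : E) (ε : ℝ) (hε : 0 < ε) :
    (1 - ε) * ‖u‖ ^ 2 - (1 / ε - 1) * ‖v‖ ^ 2 ≤ ‖u - v‖ ^ 2 := by
  have h1 : |‖u‖ - ‖v‖| ≤ ‖u - v‖ := abs_norm_sub_norm_le u v
  have h2 : (‖u‖ - ‖v‖) ^ 2 ≤ ‖u - v‖ ^ 2 := by
    have := sq_abs (‖u‖ - ‖v‖)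
    nlinarith [abs_nonneg (‖u‖ - ‖v‖), norm_nonneg (u - v)]
  have hinv : ε * (1 / ε) = 1 := mul_one_div_cancel hε.ne'
  have key : ε * ((1 - ε) * ‖u‖ ^ 2 - (1 / ε - 1) * ‖v‖ ^ 2) ≤ ε * ‖u - v‖ ^ 2 := by
    nlinarith [sq_nonneg (ε * ‖u‖ - ‖v‖), h2]
  exact (mul_le_mul_iff_right₀ hε).mp key

set_option maxHeartbeats 1000000 in
/-- a weaker lower bound for the 2×2 block operator via ε-inequalities;
in particular the block matrix `[[A,−B],[−C,D]]` is injective. -/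
theorem block_lower_bound_eps {m p r q : ℕ}
    (A : Matrix (Fin m) (Fin p) ℂ) (B : Matrix (Fin m) (Fin q) ℂ)
    (C : Matrix (Fin r) (Fin p) ℂ) (D : Matrix (Fin r) (Fin q) ℂ)
    (a₀ b c d₀ : ℝ) (ha₀ : 0 < a₀) (hd₀ : 0 < d₀)
    (hA : ∀ x : EuclideanSpace ℂ (Fin p), a₀ * ‖x‖ ≤ ‖Matrix.toEuclideanLin A x‖)
    (hB : ∀ x : EuclideanSpace ℂ (Fin q), ‖Matrix.toEuclideanLin B x‖ ≤ b * ‖x‖)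
    (hC : ∀ x : EuclideanSpace ℂ (Fin p), ‖Matrix.toEuclideanLin C x‖ ≤ c * ‖x‖)
    (hD : ∀ x : EuclideanSpace ℂ (Fin q), d₀ * ‖x‖ ≤ ‖Matrix.toEuclideanLin D x‖)
    (hbc : 0 < b * c) (hdet : b * c < a₀ * d₀) :
    (∃ ε₁ ε₂ : ℝ, 0 < ε₁ ∧ ε₁ < 1 ∧ 0 < ε₂ ∧ ε₂ < 1 ∧
      0 < a₀ ^ 2 * (1 - ε₁) - c ^ 2 * (1 / ε₂ - 1) ∧
      0 < d₀ ^ 2 * (1 - ε₂) - b ^ 2 * (1 / ε₁ - 1) ∧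
      ∀ (x : EuclideanSpace ℂ (Fin p)) (y : EuclideanSpace ℂ (Fin q)),
        min (a₀ ^ 2 * (1 - ε₁) - c ^ 2 * (1 / ε₂ - 1))
            (d₀ ^ 2 * (1 - ε₂) - b ^ 2 * (1 / ε₁ - 1)) * (‖x‖ ^ 2 + ‖y‖ ^ 2) ≤
          ‖Matrix.toEuclideanLin A x - Matrix.toEuclideanLin B y‖ ^ 2 +
            ‖Matrix.toEuclideanLin C x - Matrix.toEuclideanLin D y‖ ^ 2) ∧
    Function.Injective (fun xy : EuclideanSpace ℂ (Fin p) × EuclideanSpace ℂ (Fin q) =>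
      (Matrix.toEuclideanLin A xy.1 - Matrix.toEuclideanLin B xy.2,
        -Matrix.toEuclideanLin C xy.1 + Matrix.toEuclideanLin D xy.2)) := by
  -- abbreviations
  have hbne : b ≠ 0 := by rintro rfl; simp at hbc
  have hcne : c ≠ 0 := by rintro rfl; simp at hbc
  set β : ℝ := |b| with hβdef
  set γ : ℝ := |c| with hγdef
  have hβ : 0 < β := abs_pos.mpr hbne
  have hγ : 0 < γ := abs_pos.mpr hcne
  have hβγ : β * γ = b * c := by
    rw [hβdef, hγdef, ← abs_mul]; exact abs_of_pos hbc
  have hb2 : b ^ 2 = β ^ 2 := (sq_abs b).symm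
  have hc2 : c ^ 2 = γ ^ 2 := (sq_abs c).symm
  set δ : ℝ := a₀ * d₀ - b * c with hδdef
  have hδ : 0 < δ := sub_pos.mpr hdet
  set S : ℝ := a₀ * β + d₀ * γ with hSdef
  have hS : 0 < S := by positivity
  set t : ℝ := δ / S with htdef
  have ht : 0 < t := div_pos hδ hS
  have htS : t * S = δ := div_mul_cancel₀ _ hS.ne'
  clear_value β γ δ S t
  clear htdef
  have htS' : t * (a₀ * β) + t * (d₀ * γ) = δ := by rw [hSdef] at htS; linarith [htS]
  have ht1 : a₀ * β * t < δ := by nlinarith only [htS', mul_pos (mul_pos hd₀ hγ) ht]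
  have ht2 : d₀ * γ * t < δ := by nlinarith only [htS', mul_pos (mul_pos ha₀ hβ) ht]
  have hγta : γ * t < a₀ := by nlinarith only [ht2, hbc, hδdef, hd₀]
  have hβtd : β * t < d₀ := by nlinarith only [ht1, hbc, hδdef, ha₀]
  set ε₁ : ℝ := 1 - γ * t / a₀ with hε₁def
  set ε₂ : ℝ := 1 - β * t / d₀ with hε₂def
  clear_value ε₁ ε₂
  have hε₁pos : 0 < ε₁ := by
    rw [hε₁def]; rw [sub_pos, div_lt_one ha₀]; exact hγta
  have hε₁lt : ε₁ < 1 := by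
    rw [hε₁def]; have : 0 < γ * t / a₀ := by positivity
    linarith
  have hε₂pos : 0 < ε₂ := by
    rw [hε₂def]; rw [sub_pos, div_lt_one hd₀]; exact hβtd
  have hε₂lt : ε₂ < 1 := by
    rw [hε₂def]; have : 0 < β * t / d₀ := by positivity
    linarith
  -- closed-form for the ε-expressions
  have h1ε₁ : 1 - ε₁ = γ * t / a₀ := by rw [hε₁def]; ring
  have h1ε₂ : 1 - ε₂ = β * t / d₀ := by rw [hε₂def]; ring
  have hpa : 0 < a₀ - γ * t := sub_pos.mpr hγta
  have hpd : 0 < d₀ - β * t := sub_pos.mpr hβtd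
  have hinv₁ : 1 / ε₁ - 1 = (γ * t) / (a₀ - γ * t) := by
    rw [hε₁def, show (1:ℝ) - γ * t / a₀ = (a₀ - γ * t) / a₀ by field_simp,
      one_div_div, div_sub_one hpa.ne']
    congr 1; ring
  have hinv₂ : 1 / ε₂ - 1 = (β * t) / (d₀ - β * t) := by
    rw [hε₂def, show (1:ℝ) - β * t / d₀ = (d₀ - β * t) / d₀ by field_simp,
      one_div_div, div_sub_one hpd.ne']
    congr 1; ring
  have hK₁ : 0 < a₀ ^ 2 * (1 - ε₁) - c ^ 2 * (1 / ε₂ - 1) := by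
    rw [h1ε₁, hinv₂, hc2, sub_pos, mul_div_assoc', mul_div_assoc',
      div_lt_div_iff₀ hpd ha₀]
    nlinarith only [ht1, hβγ, hδdef, mul_pos (mul_pos ha₀ hγ) ht, ht, hγ, ha₀, hpd]
  have hK₂ : 0 < d₀ ^ 2 * (1 - ε₂) - b ^ 2 * (1 / ε₁ - 1) := by
    rw [h1ε₂, hinv₁, sub_pos, mul_div_assoc', mul_div_assoc',
      div_lt_div_iff₀ hpa hd₀]
    rw [hb2]
    nlinarith only [ht2, hβγ, hδdef, mul_pos (mul_pos hd₀ hβ) ht, ht, hβ, hd₀, hpa]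
  -- main inequality
  have hmain : ∀ (x : EuclideanSpace ℂ (Fin p)) (y : EuclideanSpace ℂ (Fin q)),
      min (a₀ ^ 2 * (1 - ε₁) - c ^ 2 * (1 / ε₂ - 1))
          (d₀ ^ 2 * (1 - ε₂) - b ^ 2 * (1 / ε₁ - 1)) * (‖x‖ ^ 2 + ‖y‖ ^ 2) ≤
        ‖Matrix.toEuclideanLin A x - Matrix.toEuclideanLin B y‖ ^ 2 +
          ‖Matrix.toEuclideanLin C x - Matrix.toEuclideanLin D y‖ ^ 2 := by
    intro x y
    have kA := eps_norm_lower (Matrix.toEuclideanLin A x) (Matrix.toEuclideanLin B y) ε₁ hε₁pos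
    have kD := eps_norm_lower (Matrix.toEuclideanLin D y) (Matrix.toEuclideanLin C x) ε₂ hε₂pos
    rw [norm_sub_rev] at kD
    have hA2 : a₀ ^ 2 * ‖x‖ ^ 2 ≤ ‖Matrix.toEuclideanLin A x‖ ^ 2 := by
      have := pow_le_pow_left₀ (by positivity) (hA x) 2
      rwa [mul_pow] at this
    have hD2 : d₀ ^ 2 * ‖y‖ ^ 2 ≤ ‖Matrix.toEuclideanLin D y‖ ^ 2 := by
      have := pow_le_pow_left₀ (by positivity) (hD y) 2
      rwa [mul_pow] at this
    have hB2 : ‖Matrix.toEuclideanLin B y‖ ^ 2 ≤ b ^ 2 * ‖y‖ ^ 2 := by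
      have := pow_le_pow_left₀ (norm_nonneg _) (hB y) 2
      rwa [mul_pow] at this
    have hC2 : ‖Matrix.toEuclideanLin C x‖ ^ 2 ≤ c ^ 2 * ‖x‖ ^ 2 := by
      have := pow_le_pow_left₀ (norm_nonneg _) (hC x) 2
      rwa [mul_pow] at this
    have hcoef₁ : (0:ℝ) ≤ 1 - ε₁ := by linarith only [hε₁lt]
    have hcoef₂ : (0:ℝ) ≤ 1 - ε₂ := by linarith only [hε₂lt]
    have hcoef₃ : (0:ℝ) ≤ 1 / ε₁ - 1 := by
      have := one_le_one_div hε₁pos hε₁lt.le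
      linarith only [this]
    have hcoef₄ : (0:ℝ) ≤ 1 / ε₂ - 1 := by
      have := one_le_one_div hε₂pos hε₂lt.le
      linarith only [this]
    have hmin₁ := min_le_left (a₀ ^ 2 * (1 - ε₁) - c ^ 2 * (1 / ε₂ - 1))
      (d₀ ^ 2 * (1 - ε₂) - b ^ 2 * (1 / ε₁ - 1))
    have hmin₂ := min_le_right (a₀ ^ 2 * (1 - ε₁) - c ^ 2 * (1 / ε₂ - 1))
      (d₀ ^ 2 * (1 - ε₂) - b ^ 2 * (1 / ε₁ - 1))
    linarith only [kA, kD, mul_le_mul_of_nonneg_left hA2 hcoef₁, mul_le_mul_of_nonneg_left hD2 hcoef₂,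
      mul_le_mul_of_nonneg_left hB2 hcoef₃, mul_le_mul_of_nonneg_left hC2 hcoef₄,
      mul_le_mul_of_nonneg_right hmin₁ (sq_nonneg ‖x‖),
      mul_le_mul_of_nonneg_right hmin₂ (sq_nonneg ‖y‖)]
  refine ⟨⟨ε₁, ε₂, hε₁pos, hε₁lt, hε₂pos, hε₂lt, hK₁, hK₂, hmain⟩, ?_⟩
  -- injectivity
  rintro ⟨x₁, y₁⟩ ⟨x₂, y₂⟩ h
  simp only [Prod.mk.injEq] at h
  obtain ⟨h1, h2⟩ := h
  set x := x₁ - x₂ with hx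
  set y := y₁ - y₂ with hy
  have e1 : Matrix.toEuclideanLin A x - Matrix.toEuclideanLin B y = 0 := by
    rw [hx, hy, map_sub, map_sub, sub_sub_sub_comm, h1, sub_self]
  have h2' : Matrix.toEuclideanLin C x₁ - Matrix.toEuclideanLin D y₁ =
      Matrix.toEuclideanLin C x₂ - Matrix.toEuclideanLin D y₂ := by
    have hneg := congrArg Neg.neg h2
    rw [neg_add, neg_add, neg_neg, neg_neg] at hneg
    rw [sub_eq_add_neg, sub_eq_add_neg]
    exact hneg
  have e2 : Matrix.toEuclideanLin C x - Matrix.toEuclideanLin D y = 0 := by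
    rw [hx, hy, map_sub, map_sub, sub_sub_sub_comm, h2', sub_self]
  have hb := hmain x y
  rw [e1, e2] at hb
  simp only [norm_zero] at hb
  have hminpos : 0 < min (a₀ ^ 2 * (1 - ε₁) - c ^ 2 * (1 / ε₂ - 1))
      (d₀ ^ 2 * (1 - ε₂) - b ^ 2 * (1 / ε₁ - 1)) := lt_min hK₁ hK₂
  have hsum : ‖x‖ ^ 2 + ‖y‖ ^ 2 ≤ 0 := by
    by_contra hcon
    push_neg at hcon
    nlinarith only [hb, hminpos, hcon]
  have hx0 : x = 0 := by
    have hxn : ‖x‖ = 0 := by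
      nlinarith only [hsum, sq_nonneg ‖x‖, sq_nonneg ‖y‖, norm_nonneg x]
    exact norm_eq_zero.mp hxn
  have hy0 : y = 0 := by
    have hyn : ‖y‖ = 0 := by
      nlinarith only [hsum, sq_nonneg ‖x‖, sq_nonneg ‖y‖, norm_nonneg y]
    exact norm_eq_zero.mp hyn
  exact Prod.ext (sub_eq_zero.mp hx0) (sub_eq_zero.mp hy0)
end

section
/- Norm of a non-orthogonal projection in an inner product space: let Π be an idempotent linear operator (Π² = Π) with Π ≠ 0 and Π ≠ I on a finite-dimensional complex inner product space. Then ‖Π‖ = ‖I − Π‖, where the norm is the operator norm induced by the inner product. -/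
open ContinuousLinearMap Module.End

local notation "⟪" x ", " y "⟫" => @inner ℂ _ _ x y

/-- A nonzero idempotent has operator norm at least 1. -/
lemma one_le_norm_of_idem {E : Type*} [NormedAddCommGroup E]
    [InnerProductSpace ℂ E] (T : E →L[ℂ] E) (hT : T ∘L T = T) (h0 : T ≠ 0) :
    1 ≤ ‖T‖ := by
  obtain ⟨x, hx⟩ : ∃ x, T x ≠ 0 := by
    by_contra h
    push_neg at h
    exact h0 (ContinuousLinearMap.ext fun x => h x)
  have h1 : T (T x) = T x := by
    have := ContinuousLinearMap.ext_iff.1 hT x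
    simpa using this
  have h2 : ‖T x‖ ≤ ‖T‖ * ‖T x‖ := by
    conv_lhs => rw [← h1]
    exact T.le_opNorm _
  have hpos : 0 < ‖T x‖ := norm_pos_iff.2 hx
  exact (le_mul_iff_one_le_left hpos).1 h2

/-- Key lemma: `‖I - T‖ ≤ ‖T‖` for a nontrivial idempotent `T`. -/
lemma norm_compl_le {E : Type*} [NormedAddCommGroup E]
    [InnerProductSpace ℂ E] [FiniteDimensional ℂ E]
    (T : E →L[ℂ] E) (hT : T ∘L T = T) (h0 : T ≠ 0)
    (h1 : ContinuousLinearMap.id ℂ E - T ≠ 0) :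
    ‖ContinuousLinearMap.id ℂ E - T‖ ≤ ‖T‖ := by
  haveI : Nontrivial E := by
    obtain ⟨x, hx⟩ : ∃ x, T x ≠ 0 := by
      by_contra h
      push_neg at h
      exact h0 (ContinuousLinearMap.ext fun x => h x)
    have : x ≠ 0 := fun h => hx (h ▸ map_zero T)
    exact nontrivial_of_ne x 0 this
  set Q : E →L[ℂ] E := ContinuousLinearMap.id ℂ E - T with hQdef
  have hQQ : Q ∘L Q = Q := by
    simp only [hQdef, ContinuousLinearMap.comp_sub, ContinuousLinearMap.sub_comp,
      ContinuousLinearMap.id_comp, ContinuousLinearMap.comp_id, hT]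
    abel
  set S : E →L[ℂ] E := ContinuousLinearMap.adjoint T with hSdef
  set A : E →ₗ[ℂ] E := ((ContinuousLinearMap.adjoint Q ∘L Q : E →L[ℂ] E) : E →ₗ[ℂ] E) with hAdef
  have hAsymm : A.IsSymmetric := by
    intro x y
    simp only [hAdef, ContinuousLinearMap.coe_coe, ContinuousLinearMap.comp_apply]
    rw [ContinuousLinearMap.adjoint_inner_left, ContinuousLinearMap.adjoint_inner_right]
  set μ : ℝ := ⨆ x : { x : E // x ≠ 0 }, RCLike.re ⟪A x, x⟫ / ‖(x : E)‖ ^ 2 with hμdef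
  have hray : ∀ x : E, RCLike.re ⟪A x, x⟫ = ‖Q x‖ ^ 2 := by
    intro x
    simp only [hAdef, ContinuousLinearMap.coe_coe, ContinuousLinearMap.comp_apply]
    rw [ContinuousLinearMap.adjoint_inner_left]
    rw [← @inner_self_eq_norm_sq ℂ]
  have hbdd : BddAbove (Set.range fun x : { x : E // x ≠ 0 } =>
      RCLike.re ⟪A x, x⟫ / ‖(x : E)‖ ^ 2) := by
    refine ⟨‖Q‖ ^ 2, ?_⟩
    rintro r ⟨⟨x, hx⟩, rfl⟩
    simp only [hray]
    rw [div_le_iff₀ (pow_pos (norm_pos_iff.2 hx) 2)]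
    calc ‖Q x‖ ^ 2 ≤ (‖Q‖ * ‖x‖) ^ 2 := by
          gcongr; exact Q.le_opNorm x
      _ = ‖Q‖ ^ 2 * ‖x‖ ^ 2 := by ring
  -- ‖Q‖ ≤ √μ
  have hμ0 : 0 ≤ μ := by
    obtain ⟨x, hx⟩ : ∃ x : E, x ≠ 0 := exists_ne 0
    have := le_ciSup hbdd ⟨x, hx⟩
    refine le_trans ?_ this
    simp only [hray]
    positivity
  have hQle : ‖Q‖ ^ 2 ≤ μ := by
    have hQ' : ‖Q‖ ≤ Real.sqrt μ := by
      refine Q.opNorm_le_bound (Real.sqrt_nonneg μ) fun x => ?_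
      rcases eq_or_ne x 0 with rfl | hx
      · simp
      have hle : RCLike.re ⟪A x, x⟫ / ‖x‖ ^ 2 ≤ μ := le_ciSup hbdd ⟨x, hx⟩
      rw [hray, div_le_iff₀ (pow_pos (norm_pos_iff.2 hx) 2)] at hle
      have : ‖Q x‖ ^ 2 ≤ (Real.sqrt μ * ‖x‖) ^ 2 := by
        rw [mul_pow, Real.sq_sqrt hμ0]
        exact hle
      calc ‖Q x‖ = Real.sqrt (‖Q x‖ ^ 2) := (Real.sqrt_sq (norm_nonneg _)).symm
        _ ≤ Real.sqrt ((Real.sqrt μ * ‖x‖) ^ 2) := Real.sqrt_le_sqrt this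
        _ = Real.sqrt μ * ‖x‖ := Real.sqrt_sq (by positivity)
    calc ‖Q‖ ^ 2 ≤ Real.sqrt μ ^ 2 := by gcongr
      _ = μ := Real.sq_sqrt hμ0
  -- μ is an eigenvalue of A
  have heig : Module.End.HasEigenvalue A (μ : ℂ) :=
    hAsymm.hasEigenvalue_iSup_of_finiteDimensional
  obtain ⟨x, hmem, hx0⟩ := heig.exists_hasEigenvector
  have hAx : ContinuousLinearMap.adjoint Q (Q x) = (μ : ℂ) • x := by
    have := Module.End.mem_eigenspace_iff.1 hmem
    simpa [hAdef] using this
  have hone : (1 : ℝ) ≤ ‖T‖ := one_le_norm_of_idem T hT h0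
  -- It suffices to show μ ≤ ‖T‖ ^ 2
  suffices hμT : μ ≤ ‖T‖ ^ 2 by
    have : ‖Q‖ ^ 2 ≤ ‖T‖ ^ 2 := hQle.trans hμT
    nlinarith [norm_nonneg Q, norm_nonneg T]
  by_cases hμ1 : μ ≤ 1
  · nlinarith
  push_neg at hμ1
  obtain ⟨z, hzdef⟩ : ∃ z, z = Q x := ⟨_, rfl⟩
  rw [← hzdef] at hAx
  have hz0 : z ≠ 0 := by
    intro h
    rw [h, map_zero] at hAx
    have hμne : (μ : ℂ) ≠ 0 := by
      simp only [ne_eq, Complex.ofReal_eq_zero]; linarith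
    rcases smul_eq_zero.1 hAx.symm with h' | h'
    · exact hμne h'
    · exact hx0 h'
  have hTz : T z = 0 := by
    have h := ContinuousLinearMap.ext_iff.1 hT x
    simp only [ContinuousLinearMap.comp_apply] at h
    simp only [hzdef, hQdef, ContinuousLinearMap.sub_apply, ContinuousLinearMap.id_apply,
      map_sub, h, sub_self]
  have hQz : Q z = z := by
    have h := ContinuousLinearMap.ext_iff.1 hQQ x
    simp only [ContinuousLinearMap.comp_apply] at h
    rw [hzdef, h]
  have hSS : S ∘L S = S := by
    have h := congrArg ContinuousLinearMap.adjoint hT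
    rwa [ContinuousLinearMap.adjoint_comp] at h
  have hadjQ : ContinuousLinearMap.adjoint Q z = z - S z := by
    simp only [hQdef, map_sub, ContinuousLinearMap.adjoint_id, hSdef,
      ContinuousLinearMap.sub_apply, ContinuousLinearMap.id_apply]
  have hkey : z - S z = (μ : ℂ) • x := by rw [← hadjQ, hAx]
  obtain ⟨w, hwdef⟩ : ∃ w, w = S z := ⟨_, rfl⟩
  have eq1 : z - (w - T w) = (μ : ℂ) • z := by
    have h := congrArg Q hkey
    rw [map_sub, map_smul, hQz, ← hzdef] at h
    have hQS : Q (S z) = S z - T (S z) := by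
      simp only [hQdef, ContinuousLinearMap.sub_apply, ContinuousLinearMap.id_apply]
    rw [hQS, ← hwdef] at h
    exact h
  have eq2 : S (T w) = (μ : ℂ) • w := by
    have h := congrArg S eq1
    rw [map_sub, map_sub, map_smul] at h
    have hSSz : S (S z) = S z := by
      have h2 := ContinuousLinearMap.ext_iff.1 hSS z
      simpa only [ContinuousLinearMap.comp_apply] using h2
    rw [hwdef, hSSz, ← hwdef] at h
    simpa using h
  have hw0 : w ≠ 0 := by
    intro h
    rw [h, map_zero, sub_zero, sub_zero] at eq1
    -- eq1 : z = μ • z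
    have : ((μ : ℂ) - 1) • z = 0 := by rw [sub_smul, one_smul, ← eq1, sub_self]
    rcases smul_eq_zero.1 this with h' | h'
    · have : (μ : ℂ) = 1 := by rwa [sub_eq_zero] at h'
      have : μ = 1 := by exact_mod_cast this
      linarith
    · exact hz0 h'
  have hin : (⟪S (T w), w⟫ : ℂ) = ⟪T w, T w⟫ := by
    rw [hSdef]
    exact ContinuousLinearMap.adjoint_inner_left T w (T w)
  have h3 : ((μ : ℂ) * ⟪w, w⟫ : ℂ) = ⟪T w, T w⟫ := by
    rw [← hin, eq2, inner_smul_left]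
    simp [Complex.conj_ofReal]
  rw [inner_self_eq_norm_sq_to_K, inner_self_eq_norm_sq_to_K] at h3
  have h4 : μ * ‖w‖ ^ 2 = ‖T w‖ ^ 2 := by
    have h' : ((μ * ‖w‖ ^ 2 : ℝ) : ℂ) = ((‖T w‖ ^ 2 : ℝ) : ℂ) := by push_cast; exact h3
    exact_mod_cast h'
  have h5 : ‖T w‖ ≤ ‖T‖ * ‖w‖ := T.le_opNorm w
  have h6 : (0 : ℝ) < ‖w‖ := norm_pos_iff.2 hw0
  have h7 : ‖T w‖ ^ 2 ≤ ‖T‖ ^ 2 * ‖w‖ ^ 2 := by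
    nlinarith [norm_nonneg (T w), norm_nonneg T, norm_nonneg w]
  have h8 : μ * ‖w‖ ^ 2 ≤ ‖T‖ ^ 2 * ‖w‖ ^ 2 := by rw [h4]; exact h7
  exact le_of_mul_le_mul_right h8 (by positivity)

/-- the operator norm of a nontrivial (not necessarily orthogonal)
projection on a finite-dimensional complex inner product space equals that of its
complementary projection: `‖Π‖ = ‖I − Π‖`. -/
theorem norm_proj_eq_norm_compl {E : Type*} [NormedAddCommGroup E]
    [InnerProductSpace ℂ E] [FiniteDimensional ℂ E]
    (T : E →L[ℂ] E) (hT : T ∘L T = T) (h0 : T ≠ 0)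
    (h1 : T ≠ ContinuousLinearMap.id ℂ E) :
    ‖T‖ = ‖ContinuousLinearMap.id ℂ E - T‖ := by
  have hQ0 : ContinuousLinearMap.id ℂ E - T ≠ 0 := by
    intro h
    exact h1 (by rw [← sub_eq_zero]; rw [← neg_sub] at h; simpa using congrArg Neg.neg h)
  have hQQ : (ContinuousLinearMap.id ℂ E - T) ∘L (ContinuousLinearMap.id ℂ E - T)
      = ContinuousLinearMap.id ℂ E - T := by
    simp only [ContinuousLinearMap.comp_sub, ContinuousLinearMap.sub_comp,
      ContinuousLinearMap.id_comp, ContinuousLinearMap.comp_id, hT]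
    abel
  have h2 := norm_compl_le T hT h0 hQ0
  have h3 := norm_compl_le (ContinuousLinearMap.id ℂ E - T) hQQ hQ0 (by simpa using h0)
  rw [sub_sub_cancel] at h3
  exact le_antisymm h3 h2
end

section
/- Strengthened Cauchy–Schwarz for a projection: let Π be a nontrivial projection on a finite-dimensional inner product space, and define cos θ_min := sup{ |⟨x,y⟩| : x ∈ Range(Π), y ∈ Range(I−Π), ‖x‖ = ‖y‖ = 1 }. Then ‖Π‖ = 1/sin θ_min, and for all x ∈ Range(Π) and y ∈ Range(I−Π), |⟨x,y⟩| ≤ cos θ_min · ‖x‖‖y‖. -/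
open RCLike

/-- strengthened Cauchy–Schwarz for a nontrivial projection `Π`:
with `cos θ_min` the supremum of `|⟨x,y⟩|` over unit vectors `x ∈ Range Π`,
`y ∈ Range (I−Π)`, one has `‖Π‖ = 1/sin θ_min` and
`|⟨x,y⟩| ≤ cos θ_min ‖x‖‖y‖` on those ranges. -/
theorem strengthened_cauchy_schwarz {E : Type*} [NormedAddCommGroup E]
    [InnerProductSpace ℂ E] [FiniteDimensional ℂ E]
    (T : E →L[ℂ] E) (hT : T ∘L T = T) (h0 : T ≠ 0)
    (h1 : T ≠ ContinuousLinearMap.id ℂ E) :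
    let c : ℝ := sSup {r : ℝ | ∃ x ∈ Set.range T,
      ∃ y ∈ Set.range (ContinuousLinearMap.id ℂ E - T),
        ‖x‖ = 1 ∧ ‖y‖ = 1 ∧ r = ‖(inner ℂ x y : ℂ)‖}
    ‖T‖ = 1 / Real.sqrt (1 - c ^ 2) ∧
      ∀ x ∈ Set.range T, ∀ y ∈ Set.range (ContinuousLinearMap.id ℂ E - T),
        ‖(inner ℂ x y : ℂ)‖ ≤ c * ‖x‖ * ‖y‖ := by
  intro c
  set S : Set ℝ := {r : ℝ | ∃ x ∈ Set.range T,
      ∃ y ∈ Set.range (ContinuousLinearMap.id ℂ E - T),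
        ‖x‖ = 1 ∧ ‖y‖ = 1 ∧ r = ‖(inner ℂ x y : ℂ)‖} with hS
  have hcS : c = sSup S := rfl
  -- membership characterizations
  have memM : ∀ x : E, x ∈ Set.range T ↔ T x = x := by
    intro x
    constructor
    · rintro ⟨z, rfl⟩
      have := ContinuousLinearMap.ext_iff.1 hT z
      simpa using this
    · intro hx
      exact ⟨x, hx⟩
  have memN : ∀ y : E, y ∈ Set.range (ContinuousLinearMap.id ℂ E - T) ↔ T y = 0 := by
    intro y
    constructor
    · rintro ⟨w, rfl⟩
      have h2 : T (T w) = T w := by simpa using ContinuousLinearMap.ext_iff.1 hT w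
      simp [ContinuousLinearMap.sub_apply, map_sub, h2]
    · intro hy
      exact ⟨y, by simp [ContinuousLinearMap.sub_apply, hy]⟩
  -- a unit vector in range T
  obtain ⟨z0, hz0⟩ : ∃ z, T z ≠ 0 := by
    by_contra h
    push_neg at h
    exact h0 (ContinuousLinearMap.ext fun z => by simpa using h z)
  set x0 : E := ((‖T z0‖ : ℂ))⁻¹ • T z0 with hx0def
  have hx0M : x0 ∈ Set.range T := by
    rw [memM]
    have : T (T z0) = T z0 := by simpa using ContinuousLinearMap.ext_iff.1 hT z0
    simp [hx0def, map_smul, this]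
  have hx0n : ‖x0‖ = 1 := by
    have h1' : ‖T z0‖ ≠ 0 := norm_ne_zero_iff.2 hz0
    simp [hx0def, norm_smul, h1']
  -- a unit vector in range (id - T)
  obtain ⟨w0, hw0⟩ : ∃ w, w - T w ≠ 0 := by
    by_contra h
    push_neg at h
    exact h1 (ContinuousLinearMap.ext fun w => by
      have := sub_eq_zero.1 (h w)
      simpa using this.symm)
  set y0 : E := ((‖w0 - T w0‖ : ℂ))⁻¹ • (w0 - T w0) with hy0def
  have hy0N : y0 ∈ Set.range (ContinuousLinearMap.id ℂ E - T) := by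
    rw [memN]
    have hTw : T (w0 - T w0) = 0 := by
      have h2 : T (T w0) = T w0 := by simpa using ContinuousLinearMap.ext_iff.1 hT w0
      simp [map_sub, h2]
    simp [hy0def, map_smul, hTw]
  have hy0n : ‖y0‖ = 1 := by
    have h1' : ‖w0 - T w0‖ ≠ 0 := norm_ne_zero_iff.2 hw0
    simp [hy0def, norm_smul, h1']
  -- S is nonempty and bounded above by 1
  have hSne : S.Nonempty := ⟨‖(inner ℂ x0 y0 : ℂ)‖, x0, hx0M, y0, hy0N, hx0n, hy0n, rfl⟩
  have hSbdd : ∀ r ∈ S, r ≤ 1 := by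
    rintro r ⟨x, hx, y, hy, hxn, hyn, rfl⟩
    calc ‖(inner ℂ x y : ℂ)‖ ≤ ‖x‖ * ‖y‖ := norm_inner_le_norm x y
    _ = 1 := by rw [hxn, hyn]; ring
  have hSbdd' : BddAbove S := ⟨1, hSbdd⟩
  have hc0 : 0 ≤ c := by
    obtain ⟨r, hr⟩ := hSne
    have hr0 : 0 ≤ r := by
      obtain ⟨x, _, y, _, _, _, rfl⟩ := hr
      exact norm_nonneg _
    exact le_trans hr0 (le_csSup hSbdd' hr)
  have hc1 : c ≤ 1 := csSup_le hSne hSbdd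
  -- Part 2: the strengthened Cauchy-Schwarz inequality
  have part2 : ∀ x ∈ Set.range T, ∀ y ∈ Set.range (ContinuousLinearMap.id ℂ E - T),
      ‖(inner ℂ x y : ℂ)‖ ≤ c * ‖x‖ * ‖y‖ := by
    intro x hx y hy
    rcases eq_or_ne x 0 with rfl | hxne
    · simp [inner_zero_left]
    rcases eq_or_ne y 0 with rfl | hyne
    · simp [inner_zero_right]
    have hxn : ‖x‖ ≠ 0 := norm_ne_zero_iff.2 hxne
    have hyn : ‖y‖ ≠ 0 := norm_ne_zero_iff.2 hyne
    set x' : E := ((‖x‖ : ℂ))⁻¹ • x with hx'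
    set y' : E := ((‖y‖ : ℂ))⁻¹ • y with hy'
    have hx'M : x' ∈ Set.range T := by
      rw [memM]; rw [memM] at hx; simp [hx', map_smul, hx]
    have hy'N : y' ∈ Set.range (ContinuousLinearMap.id ℂ E - T) := by
      rw [memN]; rw [memN] at hy; simp [hy', map_smul, hy]
    have hx'n : ‖x'‖ = 1 := by simp [hx', norm_smul, hxn]
    have hy'n : ‖y'‖ = 1 := by simp [hy', norm_smul, hyn]
    have hmem : ‖(inner ℂ x' y' : ℂ)‖ ∈ S := ⟨x', hx'M, y', hy'N, hx'n, hy'n, rfl⟩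
    have hle : ‖(inner ℂ x' y' : ℂ)‖ ≤ c := le_csSup hSbdd' hmem
    have hval : ‖(inner ℂ x' y' : ℂ)‖ = ‖x‖⁻¹ * ‖y‖⁻¹ * ‖(inner ℂ x y : ℂ)‖ := by
      rw [hx', hy', inner_smul_left, inner_smul_right]
      simp [norm_mul, mul_assoc]
    rw [hval] at hle
    have hxpos : 0 < ‖x‖ := lt_of_le_of_ne (norm_nonneg _) (Ne.symm hxn)
    have hypos : 0 < ‖y‖ := lt_of_le_of_ne (norm_nonneg _) (Ne.symm hyn)
    calc ‖(inner ℂ x y : ℂ)‖ = (‖x‖⁻¹ * ‖y‖⁻¹ * ‖(inner ℂ x y : ℂ)‖) * ‖x‖ * ‖y‖ := by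
          field_simp
    _ ≤ c * ‖x‖ * ‖y‖ := by
          have := mul_le_mul_of_nonneg_right (mul_le_mul_of_nonneg_right hle hxpos.le) hypos.le
          linarith
  -- S is compact, so the sup is attained
  have hMclosed : IsClosed (Set.range (⇑T)) := by
    have : Set.range (⇑T) = (LinearMap.range (T : E →ₗ[ℂ] E) : Set E) := by
      ext v; simp [LinearMap.mem_range]
    rw [this]
    exact Submodule.closed_of_finiteDimensional _
  have hNclosed : IsClosed (Set.range (⇑(ContinuousLinearMap.id ℂ E - T))) := by
    have : Set.range (⇑(ContinuousLinearMap.id ℂ E - T))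
        = (LinearMap.range ((ContinuousLinearMap.id ℂ E - T) : E →ₗ[ℂ] E) : Set E) := by
      ext v; simp [LinearMap.mem_range]
    rw [this]
    exact Submodule.closed_of_finiteDimensional _
  have hKM : IsCompact (Metric.sphere (0 : E) 1 ∩ Set.range (⇑T)) :=
    (isCompact_sphere 0 1).inter_right hMclosed
  have hKN : IsCompact (Metric.sphere (0 : E) 1 ∩ Set.range (⇑(ContinuousLinearMap.id ℂ E - T))) :=
    (isCompact_sphere 0 1).inter_right hNclosed
  have hA : IsCompact ((Metric.sphere (0 : E) 1 ∩ Set.range (⇑T)) ×ˢ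
      (Metric.sphere (0 : E) 1 ∩ Set.range (⇑(ContinuousLinearMap.id ℂ E - T)))) :=
    hKM.prod hKN
  have hSeq : S = (fun p : E × E => ‖(inner ℂ p.1 p.2 : ℂ)‖) ''
      ((Metric.sphere (0 : E) 1 ∩ Set.range (⇑T)) ×ˢ
      (Metric.sphere (0 : E) 1 ∩ Set.range (⇑(ContinuousLinearMap.id ℂ E - T)))) := by
    ext r
    constructor
    · rintro ⟨x, hx, y, hy, hxn, hyn, rfl⟩
      exact ⟨(x, y), ⟨⟨by simpa using hxn, hx⟩, ⟨by simpa using hyn, hy⟩⟩, rfl⟩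
    · rintro ⟨⟨x, y⟩, ⟨⟨hxs, hx⟩, ⟨hys, hy⟩⟩, rfl⟩
      exact ⟨x, hx, y, hy, by simpa using hxs, by simpa using hys, rfl⟩
  have hScompact : IsCompact S := by
    rw [hSeq]
    exact hA.image continuous_inner.norm
  have hcmem : c ∈ S := by
    rw [hcS]
    exact hScompact.sSup_mem hSne
  obtain ⟨x1, hx1M, y1, hy1N, hx1n, hy1n, hc_eq⟩ := hcmem
  -- c < 1
  have hclt : c < 1 := by
    rcases lt_or_eq_of_le hc1 with h | h
    · exact h
    exfalso
    have hx1ne : x1 ≠ 0 := fun h' => by simp [h'] at hx1n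
    have hy1ne : y1 ≠ 0 := fun h' => by simp [h'] at hy1n
    have : ‖(inner ℂ x1 y1 : ℂ)‖ = ‖x1‖ * ‖y1‖ := by
      rw [← hc_eq, h, hx1n, hy1n]; ring
    obtain ⟨r, hr0, hr⟩ := (norm_inner_eq_norm_iff hx1ne hy1ne).1 this
    have hTy1 : T y1 = 0 := (memN y1).1 hy1N
    have hTx1 : T x1 = x1 := (memM x1).1 hx1M
    have : (0 : E) = y1 := by
      calc (0 : E) = T y1 := hTy1.symm
      _ = T (r • x1) := by rw [hr]
      _ = r • T x1 := by rw [map_smul]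
      _ = r • x1 := by rw [hTx1]
      _ = y1 := hr.symm
    exact hy1ne this.symm
  have hs2 : (0:ℝ) < 1 - c ^ 2 := by nlinarith
  have hsqrt_pos : 0 < Real.sqrt (1 - c ^ 2) := Real.sqrt_pos.2 hs2
  have hsqrt_sq : Real.sqrt (1 - c ^ 2) ^ 2 = 1 - c ^ 2 := Real.sq_sqrt hs2.le
  -- upper bound for the norm
  have hub : ‖T‖ ≤ 1 / Real.sqrt (1 - c ^ 2) := by
    apply ContinuousLinearMap.opNorm_le_bound _ (by positivity)
    intro z
    set x : E := T z with hxdef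
    set y : E := z - T z with hydef
    have hxM : x ∈ Set.range T := ⟨z, rfl⟩
    have hyN : y ∈ Set.range (ContinuousLinearMap.id ℂ E - T) := ⟨z, by simp [hydef]⟩
    have hz : z = x + y := by simp [hxdef, hydef]
    have hre : -(c * ‖x‖ * ‖y‖) ≤ re (inner ℂ x y : ℂ) := by
      have h1' := abs_re_le_norm (inner ℂ x y : ℂ)
      have h2' := part2 x hxM y hyN
      have := abs_le.1 h1'
      linarith [this.1]
    have hnorm : ‖z‖ ^ 2 = ‖x‖ ^ 2 + 2 * re (inner ℂ x y : ℂ) + ‖y‖ ^ 2 := by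
      rw [hz]; exact @norm_add_sq ℂ _ _ _ _ x y
    have hkey : (1 - c ^ 2) * ‖x‖ ^ 2 ≤ ‖z‖ ^ 2 := by
      nlinarith [sq_nonneg (‖y‖ - c * ‖x‖), norm_nonneg x, norm_nonneg y]
    have hfin : ‖x‖ * Real.sqrt (1 - c ^ 2) ≤ ‖z‖ := by
      nlinarith [norm_nonneg x, norm_nonneg z, hsqrt_pos, hsqrt_sq]
    rw [div_mul_eq_mul_div, one_mul, le_div_iff₀ hsqrt_pos]
    linarith
  -- lower bound: attaining vectors
  have hTy1 : T y1 = 0 := (memN y1).1 hy1N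
  have hTx1 : T x1 = x1 := (memM x1).1 hx1M
  set a : ℂ := inner ℂ x1 y1 with ha
  have hac : ‖a‖ = c := hc_eq.symm
  set u : ℂ := if a = 0 then 1 else (c : ℂ) / a with hu
  set y2 : E := u • y1 with hy2
  have hinner2 : (inner ℂ x1 y2 : ℂ) = (c : ℂ) := by
    rw [hy2, inner_smul_right, ← ha]
    by_cases h : a = 0
    · have : c = 0 := by rw [← hac, h, norm_zero]
      simp [hu, h, this]
    · rw [hu, if_neg h]
      field_simp
  have hu1 : ‖c • y2‖ = c := by
    by_cases h : a = 0
    · have hc00 : c = 0 := by rw [← hac, h, norm_zero]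
      simp [hc00]
    · have hcne : c ≠ 0 := fun h' => h (norm_eq_zero.1 (by rw [hac, h']))
      have : ‖u‖ = 1 := by
        rw [hu, if_neg h, norm_div, hac, Complex.norm_real, Real.norm_eq_abs,
          abs_of_nonneg hc0]
        field_simp
      rw [hy2, norm_smul, norm_smul, this, hy1n]
      simp [abs_of_nonneg hc0]
  set z1 : E := x1 - (c : ℂ) • y2 with hz1
  have hTz1 : T z1 = x1 := by
    rw [hz1, map_sub, hTx1, map_smul, hy2, map_smul, hTy1]
    simp
  have hz1norm : ‖z1‖ ^ 2 = 1 - c ^ 2 := by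
    have hexp : ‖z1‖ ^ 2 = ‖x1‖ ^ 2 - 2 * re (inner ℂ x1 ((c:ℂ) • y2) : ℂ) + ‖(c:ℂ) • y2‖ ^ 2 := by
      rw [hz1]; exact @norm_sub_sq ℂ _ _ _ _ x1 _
    have h2 : (inner ℂ x1 ((c:ℂ) • y2) : ℂ) = (c:ℂ) * (c:ℂ) := by
      rw [inner_smul_right, hinner2]
    have h3 : ‖(c:ℂ) • y2‖ = c := by
      have : (c:ℂ) • y2 = c • y2 := by simp [Complex.coe_smul]
      rw [this]; exact hu1
    rw [hexp, h2, h3, hx1n]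
    have : re ((c:ℂ) * (c:ℂ)) = c * c := by
      simp [Complex.ofReal_mul]
    rw [this]; ring
  have hz1n : ‖z1‖ = Real.sqrt (1 - c ^ 2) := by
    rw [← hz1norm]
    exact (Real.sqrt_sq (norm_nonneg _)).symm
  have hlb : 1 / Real.sqrt (1 - c ^ 2) ≤ ‖T‖ := by
    have h := T.le_opNorm z1
    rw [hTz1, hx1n, hz1n] at h
    rw [div_le_iff₀ hsqrt_pos]
    linarith
  exact ⟨le_antisymm hub hlb, part2⟩
end

section
/- The QA-norm of the coarse-grid correction equals an ℓ²-operator norm in singular-vector coordinates: with A = UΣV*, Q = VU*, 𝒫 := V*P, ℛ := U*R, and R*AP invertible, one has ‖Π‖²_{QA} = ‖Σ^{1/2} 𝒫 (ℛ*Σ𝒫)^{-1} ℛ* Σ^{1/2}‖², where Π = P(R*AP)^{-1}R*A and ‖x‖²_{QA} := ⟨QAx, x⟩. -/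
open Matrix

lemma iSup_sq_div_eq_opNorm_sq {E : Type*} [NormedAddCommGroup E] [NormedSpace ℂ E]
    [FiniteDimensional ℂ E] [Nontrivial E] (f : E →L[ℂ] E) :
    (⨆ x : {x : E // x ≠ 0}, ‖f x‖ ^ 2 / ‖(x : E)‖ ^ 2) = ‖f‖ ^ 2 := by
  have hS : (Metric.sphere (0:E) 1).Nonempty := NormedSpace.sphere_nonempty.mpr zero_le_one
  obtain ⟨x₀, hx₀S, hmax⟩ := (isCompact_sphere (0:E) 1).exists_isMaxOn hS
    f.continuous.norm.continuousOn
  have hx₀ : ‖x₀‖ = 1 := by simpa using hx₀S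
  have hx₀ne : x₀ ≠ 0 := by intro h; rw [h] at hx₀; simp at hx₀
  have h1 : ‖f‖ ≤ ‖f x₀‖ := by
    refine f.opNorm_le_bound (norm_nonneg _) fun y => ?_
    rcases eq_or_ne y 0 with rfl | hy
    · simp
    · have hyn : 0 < ‖y‖ := norm_pos_iff.mpr hy
      have hu : (‖y‖⁻¹ • y) ∈ Metric.sphere (0:E) 1 := by
        simp [norm_smul, abs_of_pos, hyn, inv_mul_cancel₀ hyn.ne']
      have : ‖f (‖y‖⁻¹ • y)‖ ≤ ‖f x₀‖ := hmax hu
      rw [f.map_smul_of_tower, norm_smul, norm_inv, norm_norm] at this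
      calc ‖f y‖ = ‖y‖ * (‖y‖⁻¹ * ‖f y‖) := by field_simp
        _ ≤ ‖y‖ * ‖f x₀‖ := by exact mul_le_mul_of_nonneg_left this hyn.le
        _ = ‖f x₀‖ * ‖y‖ := mul_comm _ _
  have hbound : ∀ x : {x : E // x ≠ 0}, ‖f x‖ ^ 2 / ‖(x : E)‖ ^ 2 ≤ ‖f‖ ^ 2 := by
    intro x
    have hx : 0 < ‖(x : E)‖ := norm_pos_iff.mpr x.2
    rw [div_le_iff₀ (by positivity)]
    calc ‖f x‖ ^ 2 ≤ (‖f‖ * ‖(x:E)‖) ^ 2 := by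
          exact pow_le_pow_left₀ (norm_nonneg _) (f.le_opNorm _) 2
      _ = ‖f‖ ^ 2 * ‖(x:E)‖ ^ 2 := by ring
  haveI : Nonempty {x : E // x ≠ 0} := ⟨⟨x₀, hx₀ne⟩⟩
  refine le_antisymm (ciSup_le hbound) ?_
  have hmem : ‖f x₀‖ ^ 2 / ‖x₀‖ ^ 2 ≤ ⨆ x : {x : E // x ≠ 0}, ‖f x‖ ^ 2 / ‖(x : E)‖ ^ 2 :=
    le_ciSup ⟨‖f‖ ^ 2, Set.forall_mem_range.mpr hbound⟩ (⟨x₀, hx₀ne⟩ : {x : E // x ≠ 0})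
  calc ‖f‖ ^ 2 ≤ ‖f x₀‖ ^ 2 := pow_le_pow_left₀ (norm_nonneg _) h1 2
    _ = ‖f x₀‖ ^ 2 / ‖x₀‖ ^ 2 := by rw [hx₀]; simp
    _ ≤ _ := hmem

lemma re_star_dotProduct {n : ℕ} (y : Fin n → ℂ) :
    (star y ⬝ᵥ y).re = ‖(WithLp.equiv 2 (Fin n → ℂ)).symm y‖ ^ 2 := by
  rw [EuclideanSpace.norm_eq, Real.sq_sqrt (by positivity)]
  simp only [dotProduct, Pi.star_apply, Complex.re_sum]
  refine Finset.sum_congr rfl fun i _ => ?_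
  have : (starRingEnd ℂ) (y i) * y i = (Complex.normSq (y i) : ℂ) := by
    rw [Complex.normSq_eq_conj_mul_self]
  simp only [RCLike.star_def, this, Complex.ofReal_re]
  rw [Complex.normSq_eq_norm_sq]
  simp

lemma quad_re_eq {n : ℕ} (T : Matrix (Fin n) (Fin n) ℂ) (w : Fin n → ℂ) :
    (star w ⬝ᵥ (Tᴴ * T) *ᵥ w).re = ‖(WithLp.equiv 2 (Fin n → ℂ)).symm (T *ᵥ w)‖ ^ 2 := by
  rw [← re_star_dotProduct]
  congr 1
  rw [← Matrix.mulVec_mulVec, Matrix.dotProduct_mulVec, ← Matrix.star_mulVec]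

set_option maxHeartbeats 2000000 in
/-- the squared `QA`-norm of the coarse-grid correction projection
`Π = P(RᴴAP)⁻¹RᴴA` equals the squared ℓ²-operator norm of
`Σ^{1/2} calP (calRᴴ Σ calP)⁻¹ calRᴴ Σ^{1/2}` in singular-vector coordinates,
where `calP = VᴴP` and `calR = UᴴR`. -/
theorem cgc_norm_in_singular_coordinates {n nc : ℕ} (hn : 0 < n)
    (A U V : Matrix (Fin n) (Fin n) ℂ)
    (hU : U ∈ Matrix.unitaryGroup (Fin n) ℂ) (hV : V ∈ Matrix.unitaryGroup (Fin n) ℂ)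
    (d : Fin n → ℝ) (hd : ∀ i, 0 < d i)
    (hA : A = U * Matrix.diagonal (fun i => (d i : ℂ)) * Vᴴ)
    (P R : Matrix (Fin n) (Fin nc) ℂ)
    (hc : IsUnit (Rᴴ * A * P).det) :
    let Q := V * Uᴴ
    let Pi := P * (Rᴴ * A * P)⁻¹ * Rᴴ * A
    let calP := Vᴴ * P
    let calR := Uᴴ * R
    let Sig := Matrix.diagonal fun i => ((Real.sqrt (d i) : ℝ) : ℂ)
    (⨆ x : {x : Fin n → ℂ // x ≠ 0},
        (star (Pi.mulVec (x : Fin n → ℂ)) ⬝ᵥ (Q * A).mulVec (Pi.mulVec (x : Fin n → ℂ))).re /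
          (star (x : Fin n → ℂ) ⬝ᵥ (Q * A).mulVec (x : Fin n → ℂ)).re) =
      opNorm (Sig * calP * (calRᴴ * Matrix.diagonal (fun i => (d i : ℂ)) * calP)⁻¹ * calRᴴ * Sig) ^ 2 := by
  intro Q Pi calP calR Sig
  set D : Matrix (Fin n) (Fin n) ℂ := Matrix.diagonal (fun i => (d i : ℂ)) with hD
  have hUU : Uᴴ * U = 1 := by
    have := Matrix.mem_unitaryGroup_iff'.mp hU
    simpa [Matrix.star_eq_conjTranspose] using this
  have hVV : Vᴴ * V = 1 := by
    have := Matrix.mem_unitaryGroup_iff'.mp hV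
    simpa [Matrix.star_eq_conjTranspose] using this
  have hSS : Sig * Sig = D := by
    rw [hD, Matrix.diagonal_mul_diagonal]
    refine congrArg Matrix.diagonal (funext fun i => ?_)
    rw [← Complex.ofReal_mul, Real.mul_self_sqrt (hd i).le]
  have hSigH : Sigᴴ = Sig := by
    rw [Matrix.diagonal_conjTranspose]
    refine congrArg Matrix.diagonal (funext fun i => ?_)
    simp [Complex.star_def, Complex.conj_ofReal]
  set T : Matrix (Fin n) (Fin n) ℂ := Sig * Vᴴ with hT
  have hQA : Q * A = Tᴴ * T := by
    rw [hA, hT, Matrix.conjTranspose_mul, Matrix.conjTranspose_conjTranspose, hSigH]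
    show V * Uᴴ * (U * D * Vᴴ) = V * Sig * (Sig * Vᴴ)
    calc V * Uᴴ * (U * D * Vᴴ) = V * (Uᴴ * U) * D * Vᴴ := by
          simp only [Matrix.mul_assoc]
      _ = V * D * Vᴴ := by rw [hUU]; simp [Matrix.mul_assoc]
      _ = V * (Sig * Sig) * Vᴴ := by rw [hSS]
      _ = V * Sig * (Sig * Vᴴ) := by simp only [Matrix.mul_assoc]
  have hRA : Rᴴ * A = calRᴴ * Sig * T := by
    rw [hA, hT]
    show Rᴴ * (U * D * Vᴴ) = (Uᴴ * R)ᴴ * Sig * (Sig * Vᴴ)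
    rw [Matrix.conjTranspose_mul, Matrix.conjTranspose_conjTranspose]
    calc Rᴴ * (U * D * Vᴴ) = Rᴴ * U * D * Vᴴ := by simp only [Matrix.mul_assoc]
      _ = Rᴴ * U * (Sig * Sig) * Vᴴ := by rw [hSS]
      _ = Rᴴ * U * Sig * (Sig * Vᴴ) := by simp only [Matrix.mul_assoc]
  have hRAP : Rᴴ * A * P = calRᴴ * D * calP := by
    show Rᴴ * A * P = (Uᴴ * R)ᴴ * D * (Vᴴ * P)
    rw [hA, Matrix.conjTranspose_mul, Matrix.conjTranspose_conjTranspose]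
    simp only [Matrix.mul_assoc]
  set M := Sig * calP * (calRᴴ * D * calP)⁻¹ * calRᴴ * Sig with hM
  have hTPi : T * Pi = M * T := by
    show T * (P * (Rᴴ * A * P)⁻¹ * Rᴴ * A) = M * T
    rw [hRAP, hM]
    calc T * (P * (calRᴴ * D * calP)⁻¹ * Rᴴ * A)
        = Sig * Vᴴ * P * (calRᴴ * D * calP)⁻¹ * (Rᴴ * A) := by
          rw [hT]; simp only [Matrix.mul_assoc]
      _ = Sig * calP * (calRᴴ * D * calP)⁻¹ * (calRᴴ * Sig * T) := by
          rw [hRA]; show _ = Sig * (Vᴴ * P) * _ * _; simp only [Matrix.mul_assoc]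
      _ = Sig * calP * (calRᴴ * D * calP)⁻¹ * calRᴴ * Sig * T := by
          simp only [Matrix.mul_assoc]
  have hdetT : IsUnit T.det := by
    rw [hT, Matrix.det_mul]
    refine (isUnit_iff_ne_zero.mpr ?_).mul ?_
    · rw [Matrix.det_diagonal]
      exact Finset.prod_ne_zero_iff.mpr fun i _ => by
        simpa using (Real.sqrt_pos.mpr (hd i)).ne'
    · exact IsUnit.of_mul_eq_one _ (by rw [← Matrix.det_mul, hVV, Matrix.det_one])
  have hTinv : T⁻¹ * T = 1 := Matrix.nonsing_inv_mul T hdetT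
  have hTinv' : T * T⁻¹ = 1 := Matrix.mul_nonsing_inv T hdetT
  have hTker : ∀ v : Fin n → ℂ, T *ᵥ v = 0 → v = 0 := by
    intro v h
    have h2 : T⁻¹ *ᵥ (T *ᵥ v) = 0 := by rw [h]; simp
    rwa [Matrix.mulVec_mulVec, hTinv, Matrix.one_mulVec] at h2
  have hTker' : ∀ v : Fin n → ℂ, T⁻¹ *ᵥ v = 0 → v = 0 := by
    intro v h
    have h2 : T *ᵥ (T⁻¹ *ᵥ v) = 0 := by rw [h]; simp
    rwa [Matrix.mulVec_mulVec, hTinv', Matrix.one_mulVec] at h2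
  set f := (Matrix.toEuclideanLin M).toContinuousLinearMap with hf
  set Es := (WithLp.equiv 2 (Fin n → ℂ)).symm with hEs
  have hfap : ∀ v : Fin n → ℂ, f (Es v) = Es (M *ᵥ v) := fun v =>
    Matrix.toEuclideanLin_apply_piLp_toLp M v
  -- pointwise rewrite of the supremand
  have hpt : ∀ x : {x : Fin n → ℂ // x ≠ 0},
      (star (Pi.mulVec (x : Fin n → ℂ)) ⬝ᵥ (Q * A).mulVec (Pi.mulVec (x : Fin n → ℂ))).re /
          (star (x : Fin n → ℂ) ⬝ᵥ (Q * A).mulVec (x : Fin n → ℂ)).re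
        = ‖f (Es (T *ᵥ (x : Fin n → ℂ)))‖ ^ 2 / ‖Es (T *ᵥ (x : Fin n → ℂ))‖ ^ 2 := by
    intro x
    rw [hQA, quad_re_eq, quad_re_eq, hfap]
    congr 2
    rw [Matrix.mulVec_mulVec, hTPi, ← Matrix.mulVec_mulVec]
  -- the change-of-variables equivalence
  have hEs0 : ∀ v : Fin n → ℂ, Es v = 0 → v = 0 := by
    intro v h
    exact (WithLp.equiv 2 (Fin n → ℂ)).symm.injective (h.trans (by simp))
  have hE0 : ∀ y : EuclideanSpace ℂ (Fin n), WithLp.equiv 2 (Fin n → ℂ) y = 0 → y = 0 := by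
    intro y h
    exact (WithLp.equiv 2 (Fin n → ℂ)).injective (by simpa using h)
  let e : {x : Fin n → ℂ // x ≠ 0} ≃ {y : EuclideanSpace ℂ (Fin n) // y ≠ 0} :=
    { toFun := fun x => ⟨Es (T *ᵥ (x : Fin n → ℂ)),
        fun h => x.2 (hTker _ (hEs0 _ h))⟩
      invFun := fun y => ⟨T⁻¹ *ᵥ (WithLp.equiv 2 (Fin n → ℂ) (y : EuclideanSpace ℂ (Fin n))),
        fun h => y.2 (hE0 _ (hTker' _ h))⟩
      left_inv := fun x => by
        refine Subtype.ext ?_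
        show T⁻¹ *ᵥ (WithLp.equiv 2 (Fin n → ℂ) (Es (T *ᵥ (x : Fin n → ℂ)))) = (x : Fin n → ℂ)
        rw [hEs, Equiv.apply_symm_apply, Matrix.mulVec_mulVec, hTinv, Matrix.one_mulVec]
      right_inv := fun y => by
        refine Subtype.ext ?_
        show Es (T *ᵥ (T⁻¹ *ᵥ (WithLp.equiv 2 (Fin n → ℂ) (y : EuclideanSpace ℂ (Fin n)))))
          = (y : EuclideanSpace ℂ (Fin n))
        rw [Matrix.mulVec_mulVec, hTinv', Matrix.one_mulVec, hEs, Equiv.symm_apply_apply] }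
  have hcomp : (⨆ x : {x : Fin n → ℂ // x ≠ 0},
      ‖f (Es (T *ᵥ (x : Fin n → ℂ)))‖ ^ 2 / ‖Es (T *ᵥ (x : Fin n → ℂ))‖ ^ 2)
      = ⨆ y : {y : EuclideanSpace ℂ (Fin n) // y ≠ 0},
          ‖f (y : EuclideanSpace ℂ (Fin n))‖ ^ 2 / ‖(y : EuclideanSpace ℂ (Fin n))‖ ^ 2 := by
    rw [iSup, iSup]
    congr 1
    exact e.surjective.range_comp
      (fun y : {y : EuclideanSpace ℂ (Fin n) // y ≠ 0} =>
        ‖f (y : EuclideanSpace ℂ (Fin n))‖ ^ 2 / ‖(y : EuclideanSpace ℂ (Fin n))‖ ^ 2)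
  haveI : Nontrivial (EuclideanSpace ℂ (Fin n)) :=
    ⟨⟨Es (_root_.Pi.single ⟨0, hn⟩ (1 : ℂ)), 0, fun h =>
      one_ne_zero (α := ℂ) (by simpa using congrFun (hEs0 _ h) ⟨0, hn⟩)⟩⟩
  have final : ‖f‖ ^ 2 = opNorm M ^ 2 := rfl
  exact (iSup_congr hpt).trans (hcomp.trans ((iSup_sq_div_eq_opNorm_sq f).trans final))
end

section
/- Inexact coarse-grid correction bound: suppose A_c = R*AP is invertible, Q_cA_c := (A_c*A_c)^{1/2}, and there are constants 0 < c₀ ≤ c₁ with c₀ ≤ ‖y_c‖²_{Q_cA_c}/‖P y_c‖²_{QA} ≤ c₁ for all coarse vectors y_c ≠ 0. If B_c is invertible with ‖(A_c^{-1} − B_c^{-1})A_c‖²_{Q_cA_c} ≤ ρ_c, then for Π = PA_c^{-1}R*A and Π̃ = PB_c^{-1}R*A and any operator G and vector e: ‖(Π − Π̃)G e‖²_{QA} ≤ (c₁ρ_c/c₀)·‖Π G e‖²_{QA}. -/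
open Matrix
open scoped ComplexOrder

/-- `⟨Mx, x⟩`-quadratic form (real part); this is `‖x‖²_M` when `M` is SPD. -/
noncomputable def normSqM {m : Type*} [Fintype m] (M : Matrix m m ℂ) (x : m → ℂ) : ℝ :=
  (star x ⬝ᵥ M.mulVec x).re

/-- The positive semidefinite square root of a positive semidefinite matrix
(the definition removed from Mathlib, restored verbatim with its old meaning). -/
noncomputable def Matrix.PosSemidef.sqrt {n : Type*} [Fintype n] [DecidableEq n]
    {A : Matrix n n ℂ} (hA : A.PosSemidef) : Matrix n n ℂ :=
  hA.1.eigenvectorUnitary.1 * diagonal ((↑) ∘ (√·) ∘ hA.1.eigenvalues) *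
    (star hA.1.eigenvectorUnitary : Matrix n n ℂ)

/-- inexact coarse-grid correction bound.  If the `Q_cA_c`- and the
`QA`-inner products are equivalent through `P` with constants `c₀ ≤ c₁`, and the
inexact coarse solve `B_c` satisfies `‖(A_c⁻¹ − B_c⁻¹)A_c‖²_{Q_cA_c} ≤ ρ_c`, then
`‖(Π − Π̃)Ge‖²_{QA} ≤ (c₁ρ_c/c₀)‖Π Ge‖²_{QA}` for every operator `G` and vector `e`. -/
theorem inexact_cgc_bound {n nc : ℕ}
    (A U V : Matrix (Fin n) (Fin n) ℂ)
    (hU : U ∈ Matrix.unitaryGroup (Fin n) ℂ) (hV : V ∈ Matrix.unitaryGroup (Fin n) ℂ)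
    (d : Fin n → ℝ) (hd : ∀ i, 0 < d i)
    (hA : A = U * Matrix.diagonal (fun i => (d i : ℂ)) * Vᴴ)
    (P R : Matrix (Fin n) (Fin nc) ℂ)
    (QA : Matrix (Fin n) (Fin n) ℂ) (hQA : QA = V * Uᴴ * A)
    (Ac : Matrix (Fin nc) (Fin nc) ℂ) (hAc : Ac = Rᴴ * A * P)
    (hAcInv : IsUnit Ac.det)
    (QcAc : Matrix (Fin nc) (Fin nc) ℂ)
    (hQcAc : QcAc = (Matrix.posSemidef_conjTranspose_mul_self Ac).sqrt)
    (Bc : Matrix (Fin nc) (Fin nc) ℂ) (hBcInv : IsUnit Bc.det)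
    (c₀ c₁ ρc : ℝ) (hc₀ : 0 < c₀) (hcc : c₀ ≤ c₁) (hρc : 0 ≤ ρc)
    (hequiv : ∀ yc : Fin nc → ℂ,
      c₀ * normSqM QA (P.mulVec yc) ≤ normSqM QcAc yc ∧
      normSqM QcAc yc ≤ c₁ * normSqM QA (P.mulVec yc))
    (hconv : ∀ z : Fin nc → ℂ,
      normSqM QcAc (((Ac⁻¹ - Bc⁻¹) * Ac).mulVec z) ≤ ρc * normSqM QcAc z) :
    ∀ (G : Matrix (Fin n) (Fin n) ℂ) (e : Fin n → ℂ),
      normSqM QA (((P * Ac⁻¹ * Rᴴ * A - P * Bc⁻¹ * Rᴴ * A) * G).mulVec e) ≤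
        c₁ * ρc / c₀ * normSqM QA (((P * Ac⁻¹ * Rᴴ * A) * G).mulVec e) := by
  intro G e
  have hid : Ac * Ac⁻¹ = 1 := Matrix.mul_nonsing_inv Ac hAcInv
  set v : Fin nc → ℂ := (Rᴴ * A * G).mulVec e with hv
  set z : Fin nc → ℂ := Ac⁻¹.mulVec v with hz
  set w : Fin nc → ℂ := ((Ac⁻¹ - Bc⁻¹) * Ac).mulVec z with hw
  have hcancel : Ac.mulVec z = v := by
    rw [hz, Matrix.mulVec_mulVec, hid, Matrix.one_mulVec]
  have hwv : w = Ac⁻¹.mulVec v - Bc⁻¹.mulVec v := by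
    rw [hw, ← Matrix.mulVec_mulVec, hcancel, Matrix.sub_mulVec]
  have hR : ((P * Ac⁻¹ * Rᴴ * A) * G).mulVec e = P.mulVec z := by
    rw [hz, hv]
    simp only [← Matrix.mulVec_mulVec, Matrix.mul_assoc]
  have hL : ((P * Ac⁻¹ * Rᴴ * A - P * Bc⁻¹ * Rᴴ * A) * G).mulVec e = P.mulVec w := by
    rw [hwv, Matrix.mulVec_sub, Matrix.sub_mul, Matrix.sub_mulVec, hv]
    simp only [← Matrix.mulVec_mulVec, Matrix.mul_assoc]
  rw [hL, hR]
  have h1 := (hequiv w).1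
  have h2 := hconv z
  have h3 := (hequiv z).2
  rw [← hw] at h2
  have h4 : ρc * normSqM QcAc z ≤ ρc * (c₁ * normSqM QA (P.mulVec z)) :=
    mul_le_mul_of_nonneg_left h3 hρc
  rw [div_mul_eq_mul_div, le_div_iff₀ hc₀]
  nlinarith [h1, h2, h4]
end

section
/- Error expansion for an inexact two-level cycle: for projections Π and Π̃ as above, any operator G, any vector e, and with cos θ_min the cosine of the minimal canonical angle between Range(Π) and Range(I−Π) in the QA-inner product, one has ‖(I−Π̃)Ge‖²_{QA} ≤ (1 + cos²θ_min)‖(I−Π)Ge‖²_{QA} + 2‖(Π−Π̃)Ge‖²_{QA}. -/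
open Matrix
open scoped ComplexOrder

/-- The `QA`-inner product `⟨x,y⟩_{QA} := ⟨QAx, y⟩` of two vectors. -/
noncomputable def innerM {m : Type*} [Fintype m] (M : Matrix m m ℂ) (x y : m → ℂ) : ℂ :=
  star (M.mulVec x) ⬝ᵥ y

lemma innerM_eq_inner {n : ℕ} {QA : Matrix (Fin n) (Fin n) ℂ} (hQA : QA.IsHermitian)
    (x y : Fin n → ℂ) : innerM QA x y = star x ⬝ᵥ QA.mulVec y := by
  rw [innerM, star_mulVec, dotProduct_mulVec, hQA.eq]

lemma key_aux {E : Type*} [NormedAddCommGroup E] [InnerProductSpace ℂ E]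
    (c : ℝ) (u v : E) (p q : E → E)
    (hp : ∀ (a : ℂ) (x : E), p (a • x) = a • p x)
    (hq : ∀ (a : ℂ) (x : E), q (a • x) = a • q x)
    (hpv : p v = v) (hqu : q u = u)
    (hc : c = sSup {r : ℝ | ∃ x y : E,
        ‖p x‖ ^ 2 = 1 ∧ ‖q y‖ ^ 2 = 1 ∧ r = ‖(inner ℂ (p x) (q y) : ℂ)‖}) :
    ‖v + u‖ ^ 2 ≤ (1 + c ^ 2) * ‖u‖ ^ 2 + 2 * ‖v‖ ^ 2 := by
  set S : Set ℝ := {r : ℝ | ∃ x y : E,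
      ‖p x‖ ^ 2 = 1 ∧ ‖q y‖ ^ 2 = 1 ∧ r = ‖(inner ℂ (p x) (q y) : ℂ)‖} with hS
  have hbdd : BddAbove S := by
    refine ⟨1, fun r hr => ?_⟩
    obtain ⟨x, y, hx, hy, rfl⟩ := hr
    have h1 : ‖p x‖ = 1 := by nlinarith [norm_nonneg (p x)]
    have h2 : ‖q y‖ = 1 := by nlinarith [norm_nonneg (q y)]
    simpa [h1, h2] using norm_inner_le_norm (𝕜 := ℂ) (p x) (q y)
  have hkey : ‖(inner ℂ v u : ℂ)‖ ≤ c * (‖v‖ * ‖u‖) := by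
    rcases eq_or_ne v 0 with rfl | hv0
    · simp
    rcases eq_or_ne u 0 with rfl | hu0
    · simp
    have ha : (0:ℝ) < ‖v‖ := norm_pos_iff.mpr hv0
    have hb : (0:ℝ) < ‖u‖ := norm_pos_iff.mpr hu0
    have hmem : (‖v‖⁻¹ * ‖u‖⁻¹) * ‖(inner ℂ v u : ℂ)‖ ∈ S := by
      refine ⟨((‖v‖ : ℂ))⁻¹ • v, ((‖u‖ : ℂ))⁻¹ • u, ?_, ?_, ?_⟩
      · rw [hp, hpv, norm_smul]
        simp [ha.ne']
      · rw [hq, hqu, norm_smul]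
        simp [hb.ne']
      · rw [hp, hq, hpv, hqu, inner_smul_left, inner_smul_right]
        simp [norm_mul, RCLike.norm_conj, abs_of_pos ha, abs_of_pos hb]
        ring
    have hle : (‖v‖⁻¹ * ‖u‖⁻¹) * ‖(inner ℂ v u : ℂ)‖ ≤ c := hc ▸ le_csSup hbdd hmem
    calc ‖(inner ℂ v u : ℂ)‖
        = (‖v‖ * ‖u‖) * ((‖v‖⁻¹ * ‖u‖⁻¹) * ‖(inner ℂ v u : ℂ)‖) := by field_simp
      _ ≤ (‖v‖ * ‖u‖) * c := mul_le_mul_of_nonneg_left hle (by positivity)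
      _ = c * (‖v‖ * ‖u‖) := by ring
  have hre : RCLike.re (inner ℂ v u : ℂ) ≤ c * (‖v‖ * ‖u‖) :=
    le_trans (RCLike.re_le_norm _) hkey
  rw [norm_add_sq (𝕜 := ℂ)]
  nlinarith [sq_nonneg (c * ‖u‖ - ‖v‖), norm_nonneg u, norm_nonneg v]

/-- error expansion for an inexact two-level cycle.  For a projection
`Π` and an operator `Π̃` with range contained in `Range(Π)`, and `c = cos θ_min` the
cosine of the minimal canonical angle between `Range(Π)` and `Range(I−Π)` in the
`QA`-inner product, `‖(I−Π̃)Ge‖²_{QA} ≤ (1+c²)‖(I−Π)Ge‖²_{QA} + 2‖(Π−Π̃)Ge‖²_{QA}`. -/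
theorem inexact_two_level_error_expansion {n : ℕ}
    (QA : Matrix (Fin n) (Fin n) ℂ) (hQA : QA.PosDef)
    (Pi Pit G : Matrix (Fin n) (Fin n) ℂ)
    (hproj : Pi * Pi = Pi) (hrange : Pi * Pit = Pit)
    (c : ℝ)
    (hc : c = sSup {r : ℝ | ∃ x y : Fin n → ℂ,
      normSqM QA (Pi.mulVec x) = 1 ∧ normSqM QA ((1 - Pi).mulVec y) = 1 ∧
        r = ‖innerM QA (Pi.mulVec x) ((1 - Pi).mulVec y)‖}) :
    ∀ e : Fin n → ℂ,
      normSqM QA (((1 - Pit) * G).mulVec e) ≤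
        (1 + c ^ 2) * normSqM QA (((1 - Pi) * G).mulVec e) +
          2 * normSqM QA (((Pi - Pit) * G).mulVec e) := by
  intro e
  letI instN := Matrix.toNormedAddCommGroup QA hQA
  letI instI := Matrix.toInnerProductSpace QA hQA.posSemidef
  have hinner : ∀ x y : Fin n → ℂ,
      (@inner ℂ _ instI.toInner x y : ℂ) = star x ⬝ᵥ QA.mulVec y := fun x y => dotProduct_comm _ _
  have hns : ∀ w : Fin n → ℂ, normSqM QA w = @norm _ instN.toNorm w ^ 2 := by
    intro w
    exact (show normSqM QA w = RCLike.re (@inner ℂ _ instI.toInner w w) by rw [hinner]; rfl).trans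
      (@inner_self_eq_norm_sq ℂ _ _ instN.toSeminormedAddCommGroup instI w)
  set u : Fin n → ℂ := ((1 - Pi) * G).mulVec e with hu
  set v : Fin n → ℂ := ((Pi - Pit) * G).mulVec e with hv
  have hsum : ((1 - Pit) * G).mulVec e = v + u := by
    rw [hu, hv, ← Matrix.add_mulVec, ← Matrix.add_mul]
    abel_nf
  have hPiv : Pi.mulVec v = v := by
    rw [hv, Matrix.mulVec_mulVec, ← Matrix.mul_assoc, Matrix.mul_sub, hproj, hrange]
  have h1Pi : (1 - Pi) * (1 - Pi) = 1 - Pi := by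
    rw [Matrix.sub_mul, Matrix.one_mul, Matrix.mul_sub, Matrix.mul_one, hproj]
    abel
  have hPiu : (1 - Pi).mulVec u = u := by
    rw [hu, Matrix.mulVec_mulVec, ← Matrix.mul_assoc, h1Pi]
  have hc' : c = sSup {r : ℝ | ∃ x y : Fin n → ℂ,
      @norm _ instN.toNorm (Pi.mulVec x) ^ 2 = 1 ∧
        @norm _ instN.toNorm ((1 - Pi).mulVec y) ^ 2 = 1 ∧
          r = ‖(@inner ℂ _ instI.toInner (Pi.mulVec x) ((1 - Pi).mulVec y) : ℂ)‖} := by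
    rw [hc]
    congr 1
    ext r
    constructor
    · rintro ⟨x, y, hx, hy, rfl⟩
      exact ⟨x, y, by rw [← hns, hx], by rw [← hns, hy],
        by rw [hinner, innerM_eq_inner hQA.isHermitian]⟩
    · rintro ⟨x, y, hx, hy, rfl⟩
      exact ⟨x, y, by rw [hns, hx], by rw [hns, hy],
        by rw [hinner, innerM_eq_inner hQA.isHermitian]⟩
  rw [hsum, hns, hns, hns]
  exact @key_aux _ instN instI c u v (Pi.mulVec ·) ((1 - Pi).mulVec ·)
    (fun a x => Matrix.mulVec_smul _ _ _) (fun a x => Matrix.mulVec_smul _ _ _)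
    hPiv hPiu hc'
end
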